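/- arXiv:2505.20504 — 7 statements merged into one kernel-verified Lean document; each statement's English description precedes it below -/
import Mathlib

section
/- Let T > 0, let (Ω, F, (F_t)_{t∈[0,T]}, P) be a filtered probability space whose filtration satisfies the usual conditions (right-continuity and completeness). Let M = (M(t))_{t∈[0,T]} be a martingale with continuous sample paths, and let A = (A(t))_{t∈[0,T]} be a progressively measurable process with continuous, strictly positive sample paths such that ∫_0^T |A(s)M(s)| ds < ∞ almost surely. If ∫_0^T A(s)M(s) ds = 0 almost surely, then P(M(t) = 0 for all t ∈ [0,T]) = 1. -/
/-!
Let `Y t = ∫₀ᵗ A M`, so that `Y T = 0` a.s., and let `τₙ` be the time at which `|A M|` first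
exceeds `n`. The process `Hₙ = 1_{s ≤ τₙ} (1 + Y²)⁻¹ A M` is bounded and adapted, and the chain
rule gives `∫₀ᵀ Hₙ = arctan (Y (τₙ ∧ T))`, which is bounded by `π / 2` and equals
`arctan (Y T) = 0` once `n` exceeds the path maximum of `|A M|`. Fubini and the martingale
property give `E[M_T ∫₀ᵀ Hₙ] = ∫₀ᵀ E[1_{s ≤ τₙ} (1 + Y²)⁻¹ A M²] ds`: the right side is
nonnegative and nondecreasing in `n`, the left side tends to `0` by dominated convergence, so
every term vanishes. Hence `M = 0` for a.e. `(s, ω)`, and continuity of the paths gives `M = 0`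
on all of `[0, T]`.
-/

open MeasureTheory Set Filter Topology

theorem forall_mem_Icc_le_iff_forall_rat {g : ℝ → ℝ} (hg : Continuous g) {a b c : ℝ}
    (hab : a ≤ b) : (∀ u ∈ Icc a b, g u ≤ c) ↔ ∀ q : ℚ, g (max a (min q b)) ≤ c := by
  refine ⟨fun h q => h _ ⟨le_max_left _ _, max_le hab (min_le_right _ _)⟩, fun h u hu => ?_⟩
  have hclamp : ∀ x : ℝ, g (max a (min x b)) ≤ c := fun x =>
    Rat.denseRange_cast.induction_on x
      (isClosed_le (hg.comp (continuous_const.max (continuous_id.min continuous_const)))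
        continuous_const) h
  simpa [min_eq_left hu.2, max_eq_right hu.1] using hclamp u

theorem exists_setIntegral_eq_intervalIntegral {E : Type*} [NormedAddCommGroup E]
    [NormedSpace ℝ E] {a b : ℝ} (hab : a ≤ b) {I : Set ℝ} (hI : I ⊆ Icc a b)
    (hI_lower : ∀ x ∈ Icc a b, ∀ y ∈ I, x ≤ y → x ∈ I) (g : ℝ → E) :
    ∃ c ∈ Icc a b, ∫ x in I, g x = ∫ x in a..c, g x := by
  set c := sSup (insert a I)
  have hbdd : BddAbove (insert a I) := ⟨b, by rintro x (rfl | hx); exacts [hab, (hI hx).2]⟩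
  have hac : a ≤ c := le_csSup hbdd (mem_insert _ _)
  have hcb : c ≤ b :=
    csSup_le (insert_nonempty _ _) (by rintro x (rfl | hx); exacts [hab, (hI hx).2])
  have hI_sub : I ⊆ Icc a c := fun x hx => ⟨(hI hx).1, le_csSup hbdd (mem_insert_of_mem _ hx)⟩
  have hsub_I : Ioo a c ⊆ I := by
    intro x hx
    obtain ⟨y, hy, hxy⟩ := exists_lt_of_lt_csSup (insert_nonempty _ _) hx.2
    rcases hy with rfl | hy
    · exact absurd hxy (not_lt.2 hx.1.le)
    · exact hI_lower x ⟨hx.1.le, hxy.le.trans (hI hy).2⟩ y hy hxy.le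
  have hI_ae : I =ᵐ[volume] Icc a c := by
    refine ae_eq_set.2 ⟨by simp [sdiff_eq_empty.2 hI_sub], measure_mono_null
      ((sdiff_subset_sdiff_right hsub_I).trans (Icc_sdiff_Ioo_same hac).subset) ?_⟩
    exact (toFinite _).measure_zero _
  refine ⟨c, ⟨hac, hcb⟩, ?_⟩
  rw [setIntegral_congr_set hI_ae, integral_Icc_eq_integral_Ioc,
    intervalIntegral.integral_of_le hac]

theorem integral_inv_one_add_sq_primitive_mul {f : ℝ → ℝ} (hf : Continuous f) (a b : ℝ) :
    ∫ s in a..b, (1 + (∫ u in a..s, f u) ^ 2)⁻¹ * f s = Real.arctan (∫ u in a..b, f u) := by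
  have hφ : Continuous fun x : ℝ => (1 + x ^ 2)⁻¹ :=
    (continuous_const.add (continuous_pow 2)).inv₀ fun x =>
      (by positivity : (0 : ℝ) < 1 + x ^ 2).ne'
  have h := intervalIntegral.integral_comp_mul_deriv (a := a) (b := b)
    (fun x _ => (hf.integral_hasStrictDerivAt a x).hasDerivAt) hf.continuousOn hφ
  simp only [Function.comp_def, integral_inv_one_add_sq, intervalIntegral.integral_same,
    Real.arctan_zero, sub_zero] at h
  exact h

theorem ae_eq_zero_of_monotone_of_tendsto_integral {α : Type*} [MeasurableSpace α]
    {ν : Measure α} {g : ℕ → α → ℝ} (hg_int : ∀ n, Integrable (g n) ν)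
    (hg_nonneg : ∀ n, 0 ≤ᵐ[ν] g n) (hg_mono : ∀ n m, n ≤ m → g n ≤ᵐ[ν] g m)
    (hg_lim : Tendsto (fun n => ∫ x, g n x ∂ν) atTop (𝓝 0)) (n : ℕ) : g n =ᵐ[ν] 0 := by
  have hle : ∫ x, g n x ∂ν ≤ 0 := ge_of_tendsto hg_lim <| eventually_atTop.2
    ⟨n, fun m hm => integral_mono_ae (hg_int n) (hg_int m) (hg_mono n m hm)⟩
  exact (integral_eq_zero_iff_of_nonneg_ae (hg_nonneg n) (hg_int n)).1
    (le_antisymm hle (integral_nonneg_of_ae (hg_nonneg n)))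

theorem stronglyMeasurable_intervalIntegral_of_continuous {Ω : Type*} {m : MeasurableSpace Ω}
    {u : ℝ → Ω → ℝ} (hu_cont : ∀ ω, Continuous (u · ω)) (hu_meas : ∀ t, Measurable (u t))
    (a b : ℝ) : StronglyMeasurable fun ω => ∫ t in a..b, u t ω := by
  have hu : StronglyMeasurable (Function.uncurry u) :=
    (measurable_uncurry_of_continuous_of_measurable hu_cont hu_meas).stronglyMeasurable
  exact (hu.integral_prod_left' (μ := volume.restrict (Ioc a b))).sub
    (hu.integral_prod_left' (μ := volume.restrict (Ioc b a)))

theorem ae_forall_Icc_eq_zero_of_ae_ae {Ω : Type*} {m0 : MeasurableSpace Ω} {μ : Measure Ω}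
    [SFinite μ] {M : ℝ → Ω → ℝ} (hM_cont : ∀ ω, Continuous (M · ω))
    (hM_meas : ∀ t, Measurable (M t)) {a b : ℝ} (hab : a < b)
    (h : ∀ᵐ s ∂volume.restrict (Icc a b), ∀ᵐ ω ∂μ, M s ω = 0) :
    ∀ᵐ ω ∂μ, ∀ t ∈ Icc a b, M t ω = 0 := by
  have hM_zero : MeasurableSet {p : Ω × ℝ | M p.2 p.1 = 0} :=
    ((measurable_uncurry_of_continuous_of_measurable hM_cont hM_meas).comp measurable_swap)
      (measurableSet_singleton 0)
  filter_upwards [(Measure.ae_ae_comm hM_zero).2 h] with ω hω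
  exact Measure.eqOn_of_ae_eq hω (hM_cont ω).continuousOn continuousOn_const
    (closure_interior_Icc hab.ne).superset

namespace MeasureTheory

variable {Ω : Type*} {m0 : MeasurableSpace Ω} {μ : Measure Ω}

def Filtration.reindex {ι κ : Type*} [Preorder ι] [Preorder κ] (ℱ : Filtration ι m0)
    (g : κ → ι) (hg : Monotone g) : Filtration κ m0 :=
  ⟨fun t => ℱ (g t), fun _ _ h => ℱ.mono (hg h), fun t => ℱ.le (g t)⟩

theorem martingale_comp_projIcc {ℱ : Filtration ℝ m0} {M : ℝ → Ω → ℝ} {a b : ℝ} (hab : a ≤ b)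
    (hM_adapted : Adapted ℱ M)
    (hM_mart : ∀ s t : ℝ, a ≤ s → s ≤ t → t ≤ b → μ[M t | ℱ s] =ᵐ[μ] M s) :
    Martingale (fun t => M (projIcc a b hab t))
      (ℱ.reindex (fun t => projIcc a b hab t) fun _ _ h => monotone_projIcc hab h) μ :=
  ⟨fun _ => (hM_adapted _).stronglyMeasurable, fun s t hst =>
    hM_mart _ _ (projIcc a b hab s).2.1 (monotone_projIcc hab hst) (projIcc a b hab t).2.2⟩

section

theorem Integrable.bdd_mul_comp_fst {ν : Measure ℝ} [IsFiniteMeasure ν] {H : ℝ → Ω → ℝ} {C : ℝ}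
    {X : Ω → ℝ} (hX : Integrable X μ) (hH_meas : Measurable fun p : Ω × ℝ => H p.2 p.1)
    (hH_bdd : ∀ s ω, |H s ω| ≤ C) :
    Integrable (fun p : Ω × ℝ => H p.2 p.1 * X p.1) (μ.prod ν) :=
  (hX.comp_fst ν).bdd_mul hH_meas.aestronglyMeasurable (ae_of_all _ fun p => hH_bdd p.2 p.1)

variable [IsFiniteMeasure μ] {ℱ : Filtration ℝ m0} {M : ℝ → Ω → ℝ}

theorem Martingale.integral_mul_of_le (hM : Martingale M ℱ μ) {s t : ℝ} (hst : s ≤ t)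
    {h : Ω → ℝ} (hh : StronglyMeasurable[ℱ s] h) {C : ℝ} (hC : ∀ ω, |h ω| ≤ C) :
    ∫ ω, h ω * M t ω ∂μ = ∫ ω, h ω * M s ω ∂μ := by
  have hint : Integrable (h * M t) μ :=
    (hM.integrable t).bdd_mul (hh.mono (ℱ.le s)).aestronglyMeasurable (ae_of_all _ hC)
  calc ∫ ω, h ω * M t ω ∂μ = ∫ ω, μ[h * M t | ℱ s] ω ∂μ := (integral_condExp (ℱ.le s)).symm
    _ = ∫ ω, (h * μ[M t | ℱ s]) ω ∂μ :=
      integral_congr_ae (condExp_mul_of_stronglyMeasurable_left hh hint (hM.integrable t))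
    _ = ∫ ω, h ω * M s ω ∂μ :=
      integral_congr_ae ((hM.condExp_ae_eq hst).mono fun ω hω => by simp [hω])

variable {ν : Measure ℝ} {H : ℝ → Ω → ℝ} {T C : ℝ}

theorem Martingale.integral_mul_ae_eq (hM : Martingale M ℱ μ) (hH_bdd : ∀ s ω, |H s ω| ≤ C)
    (hH_adapted : ∀ᵐ s ∂ν, s ≤ T ∧ StronglyMeasurable[ℱ s] (H s)) :
    (fun s => ∫ ω, H s ω * M T ω ∂μ) =ᵐ[ν] fun s => ∫ ω, H s ω * M s ω ∂μ := by
  filter_upwards [hH_adapted] with s ⟨hsT, hs⟩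
  exact hM.integral_mul_of_le hsT hs (hH_bdd s)

variable [IsFiniteMeasure ν]

theorem Martingale.integrable_integral_mul (hM : Martingale M ℱ μ)
    (hH_meas : Measurable fun p : Ω × ℝ => H p.2 p.1) (hH_bdd : ∀ s ω, |H s ω| ≤ C)
    (hH_adapted : ∀ᵐ s ∂ν, s ≤ T ∧ StronglyMeasurable[ℱ s] (H s)) :
    Integrable (fun s => ∫ ω, H s ω * M s ω ∂μ) ν :=
  ((hM.integrable T).bdd_mul_comp_fst hH_meas hH_bdd).integral_prod_right.congr
    (hM.integral_mul_ae_eq hH_bdd hH_adapted)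

theorem Martingale.integral_mul_integral_eq (hM : Martingale M ℱ μ)
    (hH_meas : Measurable fun p : Ω × ℝ => H p.2 p.1) (hH_bdd : ∀ s ω, |H s ω| ≤ C)
    (hH_adapted : ∀ᵐ s ∂ν, s ≤ T ∧ StronglyMeasurable[ℱ s] (H s)) :
    ∫ ω, M T ω * (∫ s, H s ω ∂ν) ∂μ = ∫ s, ∫ ω, H s ω * M s ω ∂μ ∂ν := by
  calc ∫ ω, M T ω * (∫ s, H s ω ∂ν) ∂μ = ∫ ω, ∫ s, H s ω * M T ω ∂ν ∂μ := by
        simp_rw [← integral_const_mul, mul_comm]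
    _ = ∫ s, ∫ ω, H s ω * M T ω ∂μ ∂ν :=
      integral_integral_swap ((hM.integrable T).bdd_mul_comp_fst hH_meas hH_bdd)
    _ = ∫ s, ∫ ω, H s ω * M s ω ∂μ ∂ν :=
      integral_congr_ae (hM.integral_mul_ae_eq hH_bdd hH_adapted)

end

def beforeExit (f : ℝ → Ω → ℝ) (n : ℕ) (ω : Ω) : Set ℝ :=
  {s | 0 ≤ s ∧ ∀ u ∈ Icc 0 s, |f u ω| ≤ n}

/-- The derivative of `s ↦ arctan (∫ u in 0..min s τₙ, f u ω)`, where
`beforeExit f n ω = [0, τₙ]`. -/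
noncomputable def stoppedArctanDeriv (f : ℝ → Ω → ℝ) (n : ℕ) (s : ℝ) (ω : Ω) : ℝ :=
  (beforeExit f n ω).indicator (fun s => (1 + (∫ u in 0..s, f u ω) ^ 2)⁻¹ * f s ω) s

variable {f : ℝ → Ω → ℝ}

theorem beforeExit_mono {n m : ℕ} (hnm : n ≤ m) (ω : Ω) : beforeExit f n ω ⊆ beforeExit f m ω :=
  fun _ hs => ⟨hs.1, fun u hu => (hs.2 u hu).trans (Nat.cast_le.2 hnm)⟩

theorem ordConnected_beforeExit (n : ℕ) (ω : Ω) : (beforeExit f n ω).OrdConnected :=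
  ⟨fun _ hx _ hy _ hz => ⟨hx.1.trans hz.1, fun u hu => hy.2 u ⟨hu.1, hu.2.trans hz.2⟩⟩⟩

theorem mem_beforeExit_iff_rat (hf : ∀ ω, Continuous (f · ω)) {n : ℕ} {s : ℝ} {ω : Ω} :
    s ∈ beforeExit f n ω ↔ 0 ≤ s ∧ ∀ q : ℚ, |f (max 0 (min q s)) ω| ≤ n :=
  and_congr_right fun hs => forall_mem_Icc_le_iff_forall_rat (hf ω).abs hs

theorem measurableSet_beforeExit {ℱ : Filtration ℝ m0} (hf : ∀ ω, Continuous (f · ω))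
    (hf_adapted : Adapted ℱ f) (n : ℕ) {s : ℝ} (hs : 0 ≤ s) :
    MeasurableSet[ℱ s] {ω | s ∈ beforeExit f n ω} := by
  simp_rw [mem_beforeExit_iff_rat hf, hs, true_and, ofPred_forall]
  exact .iInter fun q =>
    measurable_abs.comp ((hf_adapted _).mono (ℱ.mono (max_le hs (min_le_right _ _))) le_rfl)
      measurableSet_Iic

theorem measurableSet_beforeExit_prod (hf : ∀ ω, Continuous (f · ω))
    (hf_meas : ∀ t, Measurable (f t)) (n : ℕ) :
    MeasurableSet {p : Ω × ℝ | p.2 ∈ beforeExit f n p.1} := by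
  have hf_joint := measurable_uncurry_of_continuous_of_measurable hf hf_meas
  simp_rw [mem_beforeExit_iff_rat hf, ofPred_and, ofPred_forall]
  refine (measurableSet_le measurable_const measurable_snd).inter
    (.iInter fun q => measurableSet_le ?_ measurable_const)
  exact (hf_joint.comp ((measurable_const.max (measurable_const.min measurable_snd)).prodMk
    measurable_fst)).abs

theorem eventually_Icc_subset_beforeExit (hf : ∀ ω, Continuous (f · ω)) (ω : Ω) (T : ℝ) :
    ∀ᶠ n in atTop, Icc 0 T ⊆ beforeExit f n ω := by
  obtain ⟨C, hC⟩ := isCompact_Icc.exists_bound_of_continuousOn (hf ω).continuousOn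
  filter_upwards [eventually_ge_atTop ⌈C⌉₊] with n hn s hs
  refine ⟨hs.1, fun u hu => ?_⟩
  calc |f u ω| ≤ C := hC u ⟨hu.1, hu.2.trans hs.2⟩
    _ ≤ n := (Nat.le_ceil C).trans (Nat.cast_le.2 hn)

theorem abs_stoppedArctanDeriv_le (n : ℕ) (s : ℝ) (ω : Ω) : |stoppedArctanDeriv f n s ω| ≤ n := by
  by_cases hs : s ∈ beforeExit f n ω
  · rw [stoppedArctanDeriv, indicator_of_mem hs, abs_mul]
    have hφ : |(1 + (∫ u in 0..s, f u ω) ^ 2)⁻¹| ≤ 1 := by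
      rw [abs_inv, abs_of_pos (by positivity)]
      exact inv_le_one_of_one_le₀ (le_add_of_nonneg_right (sq_nonneg _))
    simpa using mul_le_mul hφ (hs.2 s ⟨hs.1, le_rfl⟩) (abs_nonneg _) zero_le_one
  · simp [stoppedArctanDeriv, indicator_of_notMem hs]

theorem measurable_stoppedArctanDeriv (hf : ∀ ω, Continuous (f · ω))
    (hf_meas : ∀ t, Measurable (f t)) (n : ℕ) :
    Measurable fun p : Ω × ℝ => stoppedArctanDeriv f n p.2 p.1 := by
  have hf_joint := measurable_uncurry_of_continuous_of_measurable hf hf_meas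
  have hY_joint := measurable_uncurry_of_continuous_of_measurable
    (fun ω => intervalIntegral.continuous_primitive (fun _ _ => (hf ω).intervalIntegrable _ _) 0)
    fun s => (stronglyMeasurable_intervalIntegral_of_continuous hf hf_meas 0 s).measurable
  refine Measurable.ite (measurableSet_beforeExit_prod hf hf_meas n) ?_ measurable_const
  exact ((hY_joint.comp measurable_swap).pow_const 2).const_add 1 |>.inv.mul
    (hf_joint.comp measurable_swap)

theorem stronglyMeasurable_stoppedArctanDeriv {ℱ : Filtration ℝ m0}
    (hf : ∀ ω, Continuous (f · ω)) (hf_adapted : Adapted ℱ f) (n : ℕ) {s : ℝ} (hs : 0 ≤ s) :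
    StronglyMeasurable[ℱ s] (stoppedArctanDeriv f n s) := by
  have hY : Measurable[ℱ s] fun ω => ∫ u in 0..s, f u ω := by
    have h := stronglyMeasurable_intervalIntegral_of_continuous (m := ℱ s)
      (u := fun u => f (min u s)) (fun ω => (hf ω).comp (continuous_id.min continuous_const))
      (fun u => (hf_adapted _).mono (ℱ.mono (min_le_right u s)) le_rfl) 0 s
    convert h.measurable using 2 with ω
    refine intervalIntegral.integral_congr fun u hu => ?_
    rw [uIcc_of_le hs] at hu
    simp [min_eq_left hu.2]
  refine (Measurable.ite (measurableSet_beforeExit hf hf_adapted n hs) ?_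
    measurable_const).stronglyMeasurable
  exact ((hY.pow_const 2).const_add 1).inv.mul (hf_adapted s)

theorem setIntegral_stoppedArctanDeriv (n : ℕ) (ω : Ω) (T : ℝ) :
    ∫ s in Icc 0 T, stoppedArctanDeriv f n s ω =
      ∫ s in Icc 0 T ∩ beforeExit f n ω, (1 + (∫ u in 0..s, f u ω) ^ 2)⁻¹ * f s ω :=
  setIntegral_indicator (ordConnected_beforeExit n ω).measurableSet

theorem abs_setIntegral_stoppedArctanDeriv_le (hf : ∀ ω, Continuous (f · ω)) (n : ℕ) (ω : Ω)
    {T : ℝ} (hT : 0 ≤ T) : |∫ s in Icc 0 T, stoppedArctanDeriv f n s ω| ≤ Real.pi / 2 := by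
  obtain ⟨c, -, hc⟩ := exists_setIntegral_eq_intervalIntegral hT
    (I := Icc 0 T ∩ beforeExit f n ω) inter_subset_left
    (fun x hx y hy hxy => ⟨hx, hx.1, fun u hu => hy.2.2 u ⟨hu.1, hu.2.trans hxy⟩⟩)
    fun s => (1 + (∫ u in 0..s, f u ω) ^ 2)⁻¹ * f s ω
  rw [setIntegral_stoppedArctanDeriv, hc, integral_inv_one_add_sq_primitive_mul (hf ω)]
  exact (abs_lt.2 (Real.arctan_mem_Ioo _)).le

theorem eventually_setIntegral_stoppedArctanDeriv (hf : ∀ ω, Continuous (f · ω)) (ω : Ω)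
    {T : ℝ} (hT : 0 ≤ T) : ∀ᶠ n in atTop,
      ∫ s in Icc 0 T, stoppedArctanDeriv f n s ω = Real.arctan (∫ u in 0..T, f u ω) := by
  filter_upwards [eventually_Icc_subset_beforeExit hf ω T] with n hn
  rw [setIntegral_stoppedArctanDeriv, inter_eq_left.2 hn, integral_Icc_eq_integral_Ioc,
    ← intervalIntegral.integral_of_le hT, integral_inv_one_add_sq_primitive_mul (hf ω)]

theorem integrable_stoppedArctanDeriv_mul (hf : ∀ ω, Continuous (f · ω))
    (hf_meas : ∀ t, Measurable (f t)) {X : Ω → ℝ} (hX : Integrable X μ) (n : ℕ) (s : ℝ) :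
    Integrable (fun ω => stoppedArctanDeriv f n s ω * X ω) μ :=
  hX.bdd_mul ((measurable_stoppedArctanDeriv hf hf_meas n).comp
    measurable_prodMk_right).aestronglyMeasurable (ae_of_all _ (abs_stoppedArctanDeriv_le n s))

theorem tendsto_integral_mul_setIntegral_stoppedArctanDeriv (hf : ∀ ω, Continuous (f · ω))
    (hf_meas : ∀ t, Measurable (f t)) {T : ℝ} (hT : 0 ≤ T)
    (h_zero : ∀ᵐ ω ∂μ, ∫ u in 0..T, f u ω = 0) {X : Ω → ℝ} (hX : Integrable X μ) :
    Tendsto (fun n => ∫ ω, X ω * (∫ s in Icc 0 T, stoppedArctanDeriv f n s ω) ∂μ) atTop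
      (𝓝 0) := by
  have hF_meas : ∀ n, StronglyMeasurable fun ω => ∫ s in Icc 0 T, stoppedArctanDeriv f n s ω :=
    fun n => (measurable_stoppedArctanDeriv hf hf_meas n).stronglyMeasurable.integral_prod_right'
  have h := tendsto_integral_of_dominated_convergence (fun ω => |X ω| * (Real.pi / 2))
    (F := fun n ω => X ω * ∫ s in Icc 0 T, stoppedArctanDeriv f n s ω)
    (fun n => hX.aestronglyMeasurable.mul (hF_meas n).aestronglyMeasurable)
    (hX.abs.mul_const _)
    (fun n => ae_of_all _ fun ω => by
      rw [norm_mul, Real.norm_eq_abs, Real.norm_eq_abs]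
      exact mul_le_mul_of_nonneg_left (abs_setIntegral_stoppedArctanDeriv_le hf n ω hT)
        (abs_nonneg _))
    (f := 0) (by
      filter_upwards [h_zero] with ω hω
      refine tendsto_const_nhds.congr' ?_
      filter_upwards [eventually_setIntegral_stoppedArctanDeriv hf ω hT] with n hn
      simp [hn, hω])
  simpa using h

variable {n : ℕ} {s x : ℝ} {ω : Ω}

theorem stoppedArctanDeriv_mul_nonneg (h : 0 ≤ f s ω * x) :
    0 ≤ stoppedArctanDeriv f n s ω * x := by
  by_cases hs : s ∈ beforeExit f n ω
  · rw [stoppedArctanDeriv, indicator_of_mem hs, mul_assoc]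
    positivity
  · simp [stoppedArctanDeriv, indicator_of_notMem hs]

theorem stoppedArctanDeriv_mul_mono (h : 0 ≤ f s ω * x) {m : ℕ} (hnm : n ≤ m) :
    stoppedArctanDeriv f n s ω * x ≤ stoppedArctanDeriv f m s ω * x := by
  by_cases hs : s ∈ beforeExit f n ω
  · rw [stoppedArctanDeriv, stoppedArctanDeriv, indicator_of_mem hs,
      indicator_of_mem (beforeExit_mono hnm ω hs)]
  · simpa [stoppedArctanDeriv, indicator_of_notMem hs] using stoppedArctanDeriv_mul_nonneg h

theorem mul_eq_zero_of_stoppedArctanDeriv_mul_eq_zero (hs : s ∈ beforeExit f n ω)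
    (h : stoppedArctanDeriv f n s ω * x = 0) : f s ω * x = 0 := by
  rw [stoppedArctanDeriv, indicator_of_mem hs, mul_assoc] at h
  exact (mul_eq_zero.1 h).resolve_left (by positivity)

variable [IsFiniteMeasure μ] {ℱ : Filtration ℝ m0} {M : ℝ → Ω → ℝ} {T : ℝ}

theorem Martingale.integral_stoppedArctanDeriv_mul_ae_eq_zero (hM : Martingale M ℱ μ)
    (hf_adapted : Adapted ℱ f) (hf_cont : ∀ ω, Continuous (f · ω)) (hT : 0 ≤ T)
    (hfM : ∀ ω, ∀ t ∈ Icc 0 T, 0 ≤ f t ω * M t ω) (h_zero : ∀ᵐ ω ∂μ, ∫ t in 0..T, f t ω = 0)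
    (n : ℕ) :
    (fun s => ∫ ω, stoppedArctanDeriv f n s ω * M s ω ∂μ) =ᵐ[volume.restrict (Icc 0 T)] 0 := by
  have hf_meas : ∀ t, Measurable (f t) := fun t => (hf_adapted t).mono (ℱ.le t) le_rfl
  have hH_meas := measurable_stoppedArctanDeriv hf_cont hf_meas
  have hH_adapted : ∀ n, ∀ᵐ s ∂volume.restrict (Icc 0 T),
      s ≤ T ∧ StronglyMeasurable[ℱ s] (stoppedArctanDeriv f n s) := fun n => by
    filter_upwards [ae_restrict_mem measurableSet_Icc] with s hs
    exact ⟨hs.2, stronglyMeasurable_stoppedArctanDeriv hf_cont hf_adapted n hs.1⟩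
  have hHM_int : ∀ n s, Integrable (fun ω => stoppedArctanDeriv f n s ω * M s ω) μ :=
    fun n s => integrable_stoppedArctanDeriv_mul hf_cont hf_meas (hM.integrable s) n s
  refine ae_eq_zero_of_monotone_of_tendsto_integral (fun n => hM.integrable_integral_mul
    (hH_meas n) (abs_stoppedArctanDeriv_le n) (hH_adapted n)) (fun n => ?_) (fun n m hnm => ?_) ?_ n
  · filter_upwards [ae_restrict_mem measurableSet_Icc] with s hs
    exact integral_nonneg fun ω => stoppedArctanDeriv_mul_nonneg (hfM ω s hs)
  · filter_upwards [ae_restrict_mem measurableSet_Icc] with s hs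
    exact integral_mono (hHM_int n s) (hHM_int m s)
      fun ω => stoppedArctanDeriv_mul_mono (hfM ω s hs) hnm
  · simp_rw [← hM.integral_mul_integral_eq (hH_meas _) (abs_stoppedArctanDeriv_le _)
      (hH_adapted _)]
    exact tendsto_integral_mul_setIntegral_stoppedArctanDeriv hf_cont hf_meas hT h_zero
      (hM.integrable T)

theorem Martingale.ae_eq_zero_of_integral_eq_zero (hM : Martingale M ℱ μ)
    (hM_cont : ∀ ω, Continuous (M · ω)) (hf_adapted : Adapted ℱ f)
    (hf_cont : ∀ ω, Continuous (f · ω)) (hT : 0 < T)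
    (hfM : ∀ ω, ∀ t ∈ Icc 0 T, M t ω ≠ 0 → 0 < f t ω * M t ω)
    (h_zero : ∀ᵐ ω ∂μ, ∫ t in 0..T, f t ω = 0) :
    ∀ᵐ ω ∂μ, ∀ t ∈ Icc 0 T, M t ω = 0 := by
  have hf_meas : ∀ t, Measurable (f t) := fun t => (hf_adapted t).mono (ℱ.le t) le_rfl
  have hfM_nonneg : ∀ ω, ∀ t ∈ Icc 0 T, 0 ≤ f t ω * M t ω := fun ω t ht => by
    by_cases hM0 : M t ω = 0
    · simp [hM0]
    · exact (hfM ω t ht hM0).le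
  refine ae_forall_Icc_eq_zero_of_ae_ae hM_cont
    (fun t => (hM.stronglyAdapted t).measurable.mono (ℱ.le t) le_rfl) hT ?_
  filter_upwards [ae_all_iff.2 (hM.integral_stoppedArctanDeriv_mul_ae_eq_zero hf_adapted hf_cont
    hT.le hfM_nonneg h_zero), ae_restrict_mem measurableSet_Icc] with s hs hsT
  have hHM : ∀ n, ∀ᵐ ω ∂μ, stoppedArctanDeriv f n s ω * M s ω = 0 := fun n =>
    (integral_eq_zero_iff_of_nonneg (fun ω => stoppedArctanDeriv_mul_nonneg (hfM_nonneg ω s hsT))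
      (integrable_stoppedArctanDeriv_mul hf_cont hf_meas (hM.integrable s) n s)).1 (hs n)
  filter_upwards [ae_all_iff.2 hHM] with ω hω
  obtain ⟨n, hn⟩ := (eventually_Icc_subset_beforeExit hf_cont ω T).exists
  by_contra hM0
  exact (hfM ω s hsT hM0).ne' (mul_eq_zero_of_stoppedArctanDeriv_mul_eq_zero (hn hsT) (hω n))

end MeasureTheory

theorem martingale_eq_zero_of_weighted_integral_eq_zero_general
    {Ω : Type*} {m0 : MeasurableSpace Ω} {μ : Measure Ω} [IsProbabilityMeasure μ]
    (T : ℝ) (hT : 0 < T)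
    (ℱ : Filtration ℝ m0)
    (M A : ℝ → Ω → ℝ)
    -- M is a martingale on [0,T] with continuous sample paths
    (hM_adapted : Adapted ℱ M)
    (hM_mart : ∀ s t : ℝ, 0 ≤ s → s ≤ t → t ≤ T → μ[M t | ℱ s] =ᵐ[μ] M s)
    (hM_cont : ∀ ω, ContinuousOn (fun t => M t ω) (Icc 0 T))
    -- A is progressively measurable with continuous, strictly positive sample paths
    (hA_prog : ProgMeasurable ℱ A)
    (hA_cont : ∀ ω, ContinuousOn (fun t => A t ω) (Icc 0 T))
    (hA_pos : ∀ ω, ∀ t ∈ Icc (0 : ℝ) T, 0 < A t ω)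
    -- the weighted integral vanishes a.s.
    (h_zero : ∀ᵐ ω ∂μ, ∫ s in (0 : ℝ)..T, A s ω * M s ω = 0) :
    ∀ᵐ ω ∂μ, ∀ t ∈ Icc (0 : ℝ) T, M t ω = 0 := by
  -- Freezing `M`, `A` and `ℱ` outside `[0, T]` yields a martingale indexed by all of `ℝ`.
  set π : ℝ → ℝ := fun t => projIcc 0 T hT.le t
  have hπ : Continuous π := continuous_subtype_val.comp continuous_projIcc
  have hπ_mem : ∀ t, π t ∈ Icc 0 T := fun t => (projIcc 0 T hT.le t).2
  have hπ_eq : ∀ t ∈ Icc 0 T, π t = t := fun t ht => by simp [π, projIcc_of_mem hT.le ht]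
  have hM' := martingale_comp_projIcc hT.le hM_adapted hM_mart
  have key : ∀ᵐ ω ∂μ, ∀ t ∈ Icc 0 T, M (π t) ω = 0 := by
    refine hM'.ae_eq_zero_of_integral_eq_zero (f := fun t ω => A (π t) ω * M (π t) ω)
      (fun ω => (hM_cont ω).comp_continuous hπ hπ_mem)
      (fun t => (IsStronglyProgressive.stronglyAdapted hA_prog _).measurable.mul
        (hM'.stronglyAdapted t).measurable)
      (fun ω => ((hA_cont ω).comp_continuous hπ hπ_mem).mul
        ((hM_cont ω).comp_continuous hπ hπ_mem)) hT
      (fun ω t _ hM0 => by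
        rw [mul_assoc]
        exact mul_pos (hA_pos ω _ (hπ_mem t)) (mul_self_pos.2 hM0)) ?_
    filter_upwards [h_zero] with ω hω
    refine (intervalIntegral.integral_congr fun t ht => ?_).trans hω
    rw [uIcc_of_le hT.le] at ht
    simp only [hπ_eq t ht]
  filter_upwards [key] with ω hω t ht
  simpa [hπ_eq t ht] using hω t ht

/-- If `M` is a continuous martingale on `[0,T]` and `A` is a progressively measurable
process with continuous, strictly positive sample paths such that
`∫_0^T |A(s)M(s)| ds < ∞` a.s. and `∫_0^T A(s)M(s) ds = 0` a.s., then
`P(M(t) = 0 for all t ∈ [0,T]) = 1`. -/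
theorem martingale_eq_zero_of_weighted_integral_eq_zero
    {Ω : Type*} {m0 : MeasurableSpace Ω} {μ : Measure Ω} [IsProbabilityMeasure μ]
    (T : ℝ) (hT : 0 < T)
    (ℱ : Filtration ℝ m0)
    -- usual conditions: right-continuity and completeness of the filtration
    (h_right : ∀ t : ℝ, ℱ t = ⨅ u : {u : ℝ // t < u}, ℱ (u : ℝ))
    (h_complete : ∀ s : Set Ω, μ s = 0 → MeasurableSet[ℱ 0] s)
    (M A : ℝ → Ω → ℝ)
    -- M is a martingale on [0,T] with continuous sample paths
    (hM_adapted : Adapted ℱ M)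
    (hM_int : ∀ t ∈ Icc (0 : ℝ) T, Integrable (M t) μ)
    (hM_mart : ∀ s t : ℝ, 0 ≤ s → s ≤ t → t ≤ T → μ[M t | ℱ s] =ᵐ[μ] M s)
    (hM_cont : ∀ ω, ContinuousOn (fun t => M t ω) (Icc 0 T))
    -- A is progressively measurable with continuous, strictly positive sample paths
    (hA_prog : ProgMeasurable ℱ A)
    (hA_cont : ∀ ω, ContinuousOn (fun t => A t ω) (Icc 0 T))
    (hA_pos : ∀ ω, ∀ t ∈ Icc (0 : ℝ) T, 0 < A t ω)
    -- integrability of A·M on [0,T], a.s.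
    (h_int : ∀ᵐ ω ∂μ, IntegrableOn (fun s => A s ω * M s ω) (Icc 0 T))
    -- the weighted integral vanishes a.s.
    (h_zero : ∀ᵐ ω ∂μ, ∫ s in (0 : ℝ)..T, A s ω * M s ω = 0) :
    ∀ᵐ ω ∂μ, ∀ t ∈ Icc (0 : ℝ) T, M t ω = 0 :=
  martingale_eq_zero_of_weighted_integral_eq_zero_general T hT ℱ M A hM_adapted hM_mart hM_cont
    hA_prog hA_cont hA_pos h_zero
end

section
/- Let T > 0, let (Ω, F, (F_t)_{t∈[0,T]}, P) be a filtered probability space whose filtration satisfies the usual conditions, and let Y = (Y(t))_{t∈[0,T]} be a progressively measurable process with continuous, strictly positive sample paths. Let x_0 > 0 and let c and c̃ be two strictly positive martingales with continuous sample paths such that ∫_0^T c(t)/Y(t) dt = x_0 and ∫_0^T c̃(t)/Y(t) dt = x_0 almost surely, and such that ∫_0^T (c(t)+c̃(t))/Y(t) dt < ∞ almost surely. Then c and c̃ are indistinguishable, i.e., P(c(t) = c̃(t) for all t ∈ [0,T]) = 1. -/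
/-!
For a nonnegative martingale `a` closed by `a(T)` and an adapted `φ ≥ 0`, conditioning on `ℱ t`
inside the time integral gives `E ∫₀ᵀ a(t) φ(t) dt = E[a(T) ∫₀ᵀ φ(t) dt]`. With `φ = b / Y` for a
strategy `b` exhausting the budget, this equals `x₀ E[a(T)]`, whichever budget-exhausting `b` is
used. Expanding `E ∫₀ᵀ (c - c')² / Y dt` into the four pairings of `c, c'` as `a` and as `b` then
gives `x₀ (E c(T) - E c(T) - E c'(T) + E c'(T)) = 0`, so `c = c'` for a.e. `t`, almost surely,
and continuity of the paths upgrades this to every `t ∈ [0, T]`.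
-/

open MeasureTheory Set
open scoped ENNReal

theorem ae_restrict_prod_fst_mem {α β : Type*} [MeasurableSpace α] [MeasurableSpace β]
    {μ : Measure α} {ν : Measure β} [SFinite ν] {s : Set α} (hs : MeasurableSet s) :
    ∀ᵐ p ∂(μ.restrict s).prod ν, p.1 ∈ s :=
  Measure.quasiMeasurePreserving_fst.ae (ae_restrict_mem hs)

theorem aemeasurable_uncurry_of_continuousOn_Icc {Ω : Type*} [MeasurableSpace Ω] {a b : ℝ}
    (hab : a ≤ b) {X : ℝ → Ω → ℝ} (hX : ∀ t ∈ Icc a b, Measurable (X t))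
    (hXc : ∀ ω, ContinuousOn (X · ω) (Icc a b)) (μ : Measure Ω) [SFinite μ] :
    AEMeasurable (fun p : ℝ × Ω => X p.1 p.2) ((volume.restrict (Icc a b)).prod μ) := by
  have hclamp : Measurable (Function.uncurry fun t ω => X (projIcc a b hab t) ω) :=
    measurable_uncurry_of_continuous_of_measurable
      (fun ω => (hXc ω).comp_continuous (continuous_subtype_val.comp continuous_projIcc)
        fun t => (projIcc a b hab t).2)
      fun t => hX _ (projIcc a b hab t).2
  refine hclamp.aemeasurable.congr ?_
  filter_upwards [ae_restrict_prod_fst_mem measurableSet_Icc] with p hp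
  simp only [Function.uncurry, projIcc_of_mem hab hp]

theorem lintegral_Icc_ofReal_eq_intervalIntegral {f : ℝ → ℝ} {a b : ℝ} (hab : a ≤ b)
    (hf : IntegrableOn f (Icc a b)) (hf0 : ∀ t ∈ Icc a b, 0 ≤ f t) :
    ∫⁻ t in Icc a b, ENNReal.ofReal (f t) = ENNReal.ofReal (∫ t in a..b, f t) := by
  rw [intervalIntegral.integral_of_le hab, ← integral_Icc_eq_integral_Ioc,
    ofReal_integral_eq_lintegral_ofReal hf
      ((ae_restrict_iff' measurableSet_Icc).2 (ae_of_all _ hf0))]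

section

variable {Ω : Type*} {m0 : MeasurableSpace Ω} {μ : Measure Ω} [IsFiniteMeasure μ]

theorem lintegral_ofReal_mul_eq_of_condExp_ae_eq {m : MeasurableSpace Ω} (hm : m ≤ m0)
    {f h : Ω → ℝ} (hf : Integrable f μ) (hf0 : 0 ≤ᵐ[μ] f) (hfh : μ[f|m] =ᵐ[μ] h)
    {g : Ω → ℝ≥0∞} (hg : Measurable[m] g) :
    ∫⁻ ω, ENNReal.ofReal (f ω) * g ω ∂μ = ∫⁻ ω, ENNReal.ofReal (h ω) * g ω ∂μ := by
  have hh : Integrable h μ := integrable_condExp.congr hfh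
  have hh0 : 0 ≤ᵐ[μ] h := (condExp_nonneg hf0).trans_eq hfh
  have hdensity : ∀ k : Ω → ℝ, Integrable k μ → ∫⁻ ω, ENNReal.ofReal (k ω) * g ω ∂μ
      = ∫⁻ ω, g ω ∂(μ.withDensity fun ω => ENNReal.ofReal (k ω)).trim hm := fun k hk => by
    rw [lintegral_trim hm hg, lintegral_withDensity_eq_lintegral_mul₀
      hk.aemeasurable.ennreal_ofReal (hg.mono hm le_rfl).aemeasurable]
    rfl
  have htrim : (μ.withDensity fun ω => ENNReal.ofReal (f ω)).trim hm
      = (μ.withDensity fun ω => ENNReal.ofReal (h ω)).trim hm := by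
    refine @Measure.ext _ m _ _ fun s hs => ?_
    rw [trim_measurableSet_eq hm hs, trim_measurableSet_eq hm hs,
      withDensity_apply _ (hm s hs), withDensity_apply _ (hm s hs),
      ← ofReal_integral_eq_lintegral_ofReal hf.restrict (ae_restrict_of_ae hf0),
      ← ofReal_integral_eq_lintegral_ofReal hh.restrict (ae_restrict_of_ae hh0),
      ← setIntegral_condExp hm hf hs, setIntegral_congr_ae (hm s hs) (hfh.mono fun _ h _ => h)]
  rw [hdensity f hf, hdensity h hh, htrim]

variable {ℱ : Filtration ℝ m0} {ν : Measure ℝ} [SFinite ν]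

theorem lintegral_prod_ofReal_mul_eq_of_condExp_ae_eq {φ : ℝ → Ω → ℝ≥0∞} {a : ℝ → Ω → ℝ}
    {ξ : Ω → ℝ} (hφ : Adapted ℱ φ) (hξ : Integrable ξ μ) (hξ0 : 0 ≤ᵐ[μ] ξ)
    (ha : ∀ᵐ t ∂ν, μ[ξ|ℱ t] =ᵐ[μ] a t)
    (hφm : AEMeasurable (fun p : ℝ × Ω => φ p.1 p.2) (ν.prod μ))
    (ham : AEMeasurable (fun p : ℝ × Ω => a p.1 p.2) (ν.prod μ)) :
    ∫⁻ p, ENNReal.ofReal (a p.1 p.2) * φ p.1 p.2 ∂ν.prod μ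
      = ∫⁻ ω, ENNReal.ofReal (ξ ω) * ∫⁻ t, φ t ω ∂ν ∂μ := by
  rw [lintegral_prod _ (ham.ennreal_ofReal.fun_mul hφm)]
  calc ∫⁻ t, ∫⁻ ω, ENNReal.ofReal (a t ω) * φ t ω ∂μ ∂ν
      = ∫⁻ t, ∫⁻ ω, ENNReal.ofReal (ξ ω) * φ t ω ∂μ ∂ν :=
        lintegral_congr_ae <| ha.mono fun t hat =>
          (lintegral_ofReal_mul_eq_of_condExp_ae_eq (ℱ.le t) hξ hξ0 hat (hφ t)).symm
    _ = ∫⁻ ω, ∫⁻ t, ENNReal.ofReal (ξ ω) * φ t ω ∂ν ∂μ :=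
        lintegral_lintegral_swap (hξ.aemeasurable.ennreal_ofReal.comp_snd.fun_mul hφm)
    _ = ∫⁻ ω, ENNReal.ofReal (ξ ω) * ∫⁻ t, φ t ω ∂ν ∂μ :=
        lintegral_congr fun ω => lintegral_const_mul' _ _ ENNReal.ofReal_ne_top

variable {Y : ℝ → Ω → ℝ} {K : ℝ≥0∞}

theorem lintegral_prod_ofReal_mul_div_eq_of_budget {a b : ℝ → Ω → ℝ} {ξ : Ω → ℝ}
    (hY : Adapted ℱ Y) (hb : Adapted ℱ b) (hξ : Integrable ξ μ) (hξ0 : 0 ≤ᵐ[μ] ξ)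
    (ha : ∀ᵐ t ∂ν, μ[ξ|ℱ t] =ᵐ[μ] a t)
    (hYm : AEMeasurable (fun p : ℝ × Ω => Y p.1 p.2) (ν.prod μ))
    (ham : AEMeasurable (fun p : ℝ × Ω => a p.1 p.2) (ν.prod μ))
    (hbm : AEMeasurable (fun p : ℝ × Ω => b p.1 p.2) (ν.prod μ))
    (hbudget : ∀ᵐ ω ∂μ, ∫⁻ t, ENNReal.ofReal (b t ω / Y t ω) ∂ν = K) :
    ∫⁻ p, ENNReal.ofReal (a p.1 p.2) * ENNReal.ofReal (b p.1 p.2 / Y p.1 p.2) ∂ν.prod μ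
      = (∫⁻ ω, ENNReal.ofReal (ξ ω) ∂μ) * K := by
  rw [lintegral_prod_ofReal_mul_eq_of_condExp_ae_eq
      (φ := fun t ω => ENNReal.ofReal (b t ω / Y t ω))
      (fun t => ((hb t).div (hY t)).ennreal_ofReal) hξ hξ0 ha (by fun_prop) ham,
    ← lintegral_mul_const'' _ hξ.aemeasurable.ennreal_ofReal]
  exact lintegral_congr_ae (hbudget.mono fun ω h => congrArg (ENNReal.ofReal (ξ ω) * ·) h)

theorem ae_ae_eq_of_martingale_of_budget {c c' : ℝ → Ω → ℝ} {ξ ξ' : Ω → ℝ} (hK : K ≠ ∞)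
    (hY : Adapted ℱ Y) (hc : Adapted ℱ c) (hc' : Adapted ℱ c')
    (hξ : Integrable ξ μ) (hξ' : Integrable ξ' μ) (hξ0 : 0 ≤ᵐ[μ] ξ) (hξ'0 : 0 ≤ᵐ[μ] ξ')
    (hcξ : ∀ᵐ t ∂ν, μ[ξ|ℱ t] =ᵐ[μ] c t) (hc'ξ' : ∀ᵐ t ∂ν, μ[ξ'|ℱ t] =ᵐ[μ] c' t)
    (hYm : AEMeasurable (fun p : ℝ × Ω => Y p.1 p.2) (ν.prod μ))
    (hcm : AEMeasurable (fun p : ℝ × Ω => c p.1 p.2) (ν.prod μ))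
    (hc'm : AEMeasurable (fun p : ℝ × Ω => c' p.1 p.2) (ν.prod μ))
    (hpos : ∀ᵐ p ∂ν.prod μ, 0 < Y p.1 p.2 ∧ 0 ≤ c p.1 p.2 ∧ 0 ≤ c' p.1 p.2)
    (hc_budget : ∀ᵐ ω ∂μ, ∫⁻ t, ENNReal.ofReal (c t ω / Y t ω) ∂ν = K)
    (hc'_budget : ∀ᵐ ω ∂μ, ∫⁻ t, ENNReal.ofReal (c' t ω / Y t ω) ∂ν = K) :
    ∀ᵐ ω ∂μ, ∀ᵐ t ∂ν, c t ω = c' t ω := by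
  have hsplit : ∀ᵐ p ∂ν.prod μ, ENNReal.ofReal ((c p.1 p.2 - c' p.1 p.2) ^ 2 / Y p.1 p.2)
      + (ENNReal.ofReal (c p.1 p.2) * ENNReal.ofReal (c' p.1 p.2 / Y p.1 p.2)
        + ENNReal.ofReal (c' p.1 p.2) * ENNReal.ofReal (c p.1 p.2 / Y p.1 p.2))
      = ENNReal.ofReal (c p.1 p.2) * ENNReal.ofReal (c p.1 p.2 / Y p.1 p.2)
        + ENNReal.ofReal (c' p.1 p.2) * ENNReal.ofReal (c' p.1 p.2 / Y p.1 p.2) := by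
    filter_upwards [hpos] with p ⟨hY, hc, hc'⟩
    simp only [← ENNReal.ofReal_mul hc, ← ENNReal.ofReal_mul hc']
    rw [← ENNReal.ofReal_add (by positivity) (by positivity),
      ← ENNReal.ofReal_add (by positivity) (by positivity),
      ← ENNReal.ofReal_add (by positivity) (by positivity)]
    congr 1
    ring
  have hsum := lintegral_congr_ae hsplit
  rw [lintegral_add_left' (by fun_prop), lintegral_add_left' (by fun_prop),
    lintegral_add_left' (by fun_prop),
    lintegral_prod_ofReal_mul_div_eq_of_budget hY hc hξ hξ0 hcξ hYm hcm hcm hc_budget,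
    lintegral_prod_ofReal_mul_div_eq_of_budget hY hc' hξ hξ0 hcξ hYm hcm hc'm hc'_budget,
    lintegral_prod_ofReal_mul_div_eq_of_budget hY hc hξ' hξ'0 hc'ξ' hYm hc'm hcm hc_budget,
    lintegral_prod_ofReal_mul_div_eq_of_budget hY hc' hξ' hξ'0 hc'ξ' hYm hc'm hc'm hc'_budget]
    at hsum
  have hfin : (∫⁻ ω, ENNReal.ofReal (ξ ω) ∂μ) * K + (∫⁻ ω, ENNReal.ofReal (ξ' ω) ∂μ) * K ≠ ∞ :=
    ENNReal.add_ne_top.2 ⟨ENNReal.mul_ne_top hξ.lintegral_lt_top.ne hK,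
      ENNReal.mul_ne_top hξ'.lintegral_lt_top.ne hK⟩
  have hzero := (ENNReal.add_left_inj hfin).1 (hsum.trans (zero_add _).symm)
  have hae : ∀ᵐ p ∂ν.prod μ, c p.1 p.2 = c' p.1 p.2 := by
    filter_upwards [(lintegral_eq_zero_iff' (by fun_prop)).1 hzero, hpos] with p hp hpos_p
    have hsq : (c p.1 p.2 - c' p.1 p.2) ^ 2 / Y p.1 p.2 ≤ 0 := ENNReal.ofReal_eq_zero.1 hp
    rw [div_le_iff₀ hpos_p.1, zero_mul] at hsq
    nlinarith [sq_nonneg (c p.1 p.2 - c' p.1 p.2)]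
  exact Measure.ae_ae_of_ae_prod (Measure.measurePreserving_swap.quasiMeasurePreserving.ae hae)

end

theorem martingale_consumption_unique_general
    {Ω : Type*} {m0 : MeasurableSpace Ω} {μ : Measure Ω} [IsProbabilityMeasure μ]
    (T : ℝ) (hT : 0 < T)
    (ℱ : Filtration ℝ m0)
    (Y : ℝ → Ω → ℝ)
    -- Y is progressively measurable with continuous, strictly positive sample paths
    (hY_prog : ProgMeasurable ℱ Y)
    (hY_cont : ∀ ω, ContinuousOn (fun t => Y t ω) (Icc 0 T))
    (hY_pos : ∀ ω, ∀ t ∈ Icc (0 : ℝ) T, 0 < Y t ω)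
    (x₀ : ℝ)
    (c c' : ℝ → Ω → ℝ)
    -- c and c' are strictly positive martingales on [0,T] with continuous sample paths
    (hc_adapted : Adapted ℱ c) (hc'_adapted : Adapted ℱ c')
    (hc_int : ∀ t ∈ Icc (0 : ℝ) T, Integrable (c t) μ)
    (hc'_int : ∀ t ∈ Icc (0 : ℝ) T, Integrable (c' t) μ)
    (hc_mart : ∀ s t : ℝ, 0 ≤ s → s ≤ t → t ≤ T → μ[c t | ℱ s] =ᵐ[μ] c s)
    (hc'_mart : ∀ s t : ℝ, 0 ≤ s → s ≤ t → t ≤ T → μ[c' t | ℱ s] =ᵐ[μ] c' s)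
    (hc_cont : ∀ ω, ContinuousOn (fun t => c t ω) (Icc 0 T))
    (hc'_cont : ∀ ω, ContinuousOn (fun t => c' t ω) (Icc 0 T))
    (hc_pos : ∀ ω, ∀ t ∈ Icc (0 : ℝ) T, 0 < c t ω)
    (hc'_pos : ∀ ω, ∀ t ∈ Icc (0 : ℝ) T, 0 < c' t ω)
    -- both strategies exhaust the initial wealth x₀, a.s.
    (hc_budget : ∀ᵐ ω ∂μ, ∫ t in (0 : ℝ)..T, c t ω / Y t ω = x₀)
    (hc'_budget : ∀ᵐ ω ∂μ, ∫ t in (0 : ℝ)..T, c' t ω / Y t ω = x₀) :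
    ∀ᵐ ω ∂μ, ∀ t ∈ Icc (0 : ℝ) T, c t ω = c' t ω := by
  have hTT : T ∈ Icc (0 : ℝ) T := ⟨hT.le, le_rfl⟩
  have hY_adapted : Adapted ℱ Y := fun t => (IsStronglyProgressive.stronglyAdapted hY_prog t).measurable
  have hjoint : ∀ X : ℝ → Ω → ℝ, Adapted ℱ X → (∀ ω, ContinuousOn (X · ω) (Icc 0 T)) →
      AEMeasurable (fun p : ℝ × Ω => X p.1 p.2) ((volume.restrict (Icc 0 T)).prod μ) :=
    fun X hX hXc => aemeasurable_uncurry_of_continuousOn_Icc hT.le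
      (fun t _ => (hX t).mono (ℱ.le t) le_rfl) hXc μ
  have hbudget : ∀ b : ℝ → Ω → ℝ, (∀ ω, ContinuousOn (b · ω) (Icc 0 T)) →
      (∀ ω, ∀ t ∈ Icc (0 : ℝ) T, 0 < b t ω) → (∀ᵐ ω ∂μ, ∫ t in (0 : ℝ)..T, b t ω / Y t ω = x₀) →
      ∀ᵐ ω ∂μ, ∫⁻ t in Icc 0 T, ENNReal.ofReal (b t ω / Y t ω) = ENNReal.ofReal x₀ :=
    fun b hbc hbpos hb => hb.mono fun ω hω => hω ▸ lintegral_Icc_ofReal_eq_intervalIntegral hT.le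
      ((hbc ω).div (hY_cont ω) fun t ht => (hY_pos ω t ht).ne').integrableOn_Icc
      fun t ht => (div_pos (hbpos ω t ht) (hY_pos ω t ht)).le
  have hpos : ∀ᵐ p ∂(volume.restrict (Icc 0 T)).prod μ,
      0 < Y p.1 p.2 ∧ 0 ≤ c p.1 p.2 ∧ 0 ≤ c' p.1 p.2 :=
    (ae_restrict_prod_fst_mem measurableSet_Icc).mono fun p hp =>
      ⟨hY_pos _ _ hp, (hc_pos _ _ hp).le, (hc'_pos _ _ hp).le⟩
  filter_upwards [ae_ae_eq_of_martingale_of_budget ENNReal.ofReal_ne_top hY_adapted hc_adapted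
    hc'_adapted (hc_int T hTT) (hc'_int T hTT) (ae_of_all _ fun ω => (hc_pos ω T hTT).le)
    (ae_of_all _ fun ω => (hc'_pos ω T hTT).le)
    ((ae_restrict_iff' measurableSet_Icc).2 (ae_of_all _ fun t ht => hc_mart t T ht.1 ht.2 le_rfl))
    ((ae_restrict_iff' measurableSet_Icc).2 (ae_of_all _ fun t ht => hc'_mart t T ht.1 ht.2 le_rfl))
    (hjoint Y hY_adapted hY_cont) (hjoint c hc_adapted hc_cont) (hjoint c' hc'_adapted hc'_cont)
    hpos (hbudget c hc_cont hc_pos hc_budget) (hbudget c' hc'_cont hc'_pos hc'_budget)] with ω hω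
  exact Measure.eqOn_Icc_of_ae_eq volume hT.ne hω (hc_cont ω) (hc'_cont ω)

/-- Uniqueness of a martingale consumption strategy: if `c` and `c'` are strictly positive
continuous martingales on `[0,T]` exhausting the initial wealth `x₀` under the strictly
positive continuous growth process `Y`, i.e., `∫_0^T c(t)/Y(t) dt = x₀ = ∫_0^T c'(t)/Y(t) dt`
a.s., then `c` and `c'` are indistinguishable. -/
theorem martingale_consumption_unique
    {Ω : Type*} {m0 : MeasurableSpace Ω} {μ : Measure Ω} [IsProbabilityMeasure μ]
    (T : ℝ) (hT : 0 < T)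
    (ℱ : Filtration ℝ m0)
    -- usual conditions: right-continuity and completeness of the filtration
    (h_right : ∀ t : ℝ, ℱ t = ⨅ u : {u : ℝ // t < u}, ℱ (u : ℝ))
    (h_complete : ∀ s : Set Ω, μ s = 0 → MeasurableSet[ℱ 0] s)
    (Y : ℝ → Ω → ℝ)
    -- Y is progressively measurable with continuous, strictly positive sample paths
    (hY_prog : ProgMeasurable ℱ Y)
    (hY_cont : ∀ ω, ContinuousOn (fun t => Y t ω) (Icc 0 T))
    (hY_pos : ∀ ω, ∀ t ∈ Icc (0 : ℝ) T, 0 < Y t ω)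
    (x₀ : ℝ) (hx₀ : 0 < x₀)
    (c c' : ℝ → Ω → ℝ)
    -- c and c' are strictly positive martingales on [0,T] with continuous sample paths
    (hc_adapted : Adapted ℱ c) (hc'_adapted : Adapted ℱ c')
    (hc_int : ∀ t ∈ Icc (0 : ℝ) T, Integrable (c t) μ)
    (hc'_int : ∀ t ∈ Icc (0 : ℝ) T, Integrable (c' t) μ)
    (hc_mart : ∀ s t : ℝ, 0 ≤ s → s ≤ t → t ≤ T → μ[c t | ℱ s] =ᵐ[μ] c s)
    (hc'_mart : ∀ s t : ℝ, 0 ≤ s → s ≤ t → t ≤ T → μ[c' t | ℱ s] =ᵐ[μ] c' s)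
    (hc_cont : ∀ ω, ContinuousOn (fun t => c t ω) (Icc 0 T))
    (hc'_cont : ∀ ω, ContinuousOn (fun t => c' t ω) (Icc 0 T))
    (hc_pos : ∀ ω, ∀ t ∈ Icc (0 : ℝ) T, 0 < c t ω)
    (hc'_pos : ∀ ω, ∀ t ∈ Icc (0 : ℝ) T, 0 < c' t ω)
    -- integrability of (c + c')/Y on [0,T], a.s.
    (h_int : ∀ᵐ ω ∂μ, IntegrableOn (fun t => (c t ω + c' t ω) / Y t ω) (Icc 0 T))
    -- both strategies exhaust the initial wealth x₀, a.s.
    (hc_budget : ∀ᵐ ω ∂μ, ∫ t in (0 : ℝ)..T, c t ω / Y t ω = x₀)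
    (hc'_budget : ∀ᵐ ω ∂μ, ∫ t in (0 : ℝ)..T, c' t ω / Y t ω = x₀) :
    ∀ᵐ ω ∂μ, ∀ t ∈ Icc (0 : ℝ) T, c t ω = c' t ω :=
  martingale_consumption_unique_general T hT ℱ Y hY_prog hY_cont hY_pos x₀ c c' hc_adapted
    hc'_adapted hc_int hc'_int hc_mart hc'_mart hc_cont hc'_cont hc_pos hc'_pos hc_budget hc'_budget
end

section
/- Let T > 0 and let f : [0,T] → ℝ be continuous. Define B_f(t) = ∫_t^T exp(−∫_t^u f(s) ds) du for 0 ≤ t ≤ T. Then for every t ∈ [0,T), ∫_0^t 1/B_f(s) ds = log(B_f(0)/B_f(t)) + ∫_0^t f(s) ds, and consequently ∫_0^T 1/B_f(s) ds = ∞ (i.e., lim_{t→T⁻} ∫_0^t 1/B_f(s) ds = ∞). -/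
open Set Filter intervalIntegral

/-- The annuity value `B_f(t) = ∫_t^T exp(−∫_t^u f(s) ds) du`. -/
noncomputable def Bann (T : ℝ) (f : ℝ → ℝ) (t : ℝ) : ℝ :=
  ∫ u in t..T, Real.exp (-∫ s in t..u, f s)

/-!
With `F` a primitive of `f` and `G t = ∫_t^T exp(-F)`, the annuity factors as
`B_f(t) = exp(F t) * G t`, so `1 / B_f = exp(-F) / G = -(log G)'`. Integrating gives
`∫_0^t 1/B_f = log G(0) - log G(t)`, which is the claimed identity, and it diverges because
`G(t) → 0⁺` as `t → T⁻`. A continuous extension of `f` from `[0,T]` to `ℝ` makes `F` a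
genuine primitive.
-/

open Real Topology

theorem ContinuousOn.exists_continuous_eqOn_Icc {f : ℝ → ℝ} {a b : ℝ} (hab : a ≤ b)
    (hf : ContinuousOn f (Icc a b)) : ∃ g : ℝ → ℝ, Continuous g ∧ EqOn f g (Icc a b) :=
  ⟨IccExtend hab ((Icc a b).domRestrict f), continuous_IccExtend_iff.mpr hf.domRestrict,
    fun _ hx => (IccExtend_of_mem hab ((Icc a b).domRestrict f) hx).symm⟩

section IntegralTail

variable {h : ℝ → ℝ} {T : ℝ}

theorem hasDerivAt_integral_tail (hh : Continuous h) (t : ℝ) :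
    HasDerivAt (fun t => ∫ u in t..T, h u) (-h t) t :=
  integral_hasDerivAt_left (hh.intervalIntegrable _ _)
    hh.stronglyMeasurable.stronglyMeasurableAtFilter hh.continuousAt

theorem integral_tail_pos (hh : Continuous h) (hpos : ∀ x, 0 < h x) {t : ℝ} (ht : t < T) :
    0 < ∫ u in t..T, h u :=
  intervalIntegral_pos_of_pos_on (hh.intervalIntegrable t T) (fun x _ => hpos x) ht

/-- `h / ∫_s^T h` is the derivative of `-log ∫_s^T h`. -/
theorem integral_div_integral_tail (hh : Continuous h) (hpos : ∀ x, 0 < h x) {a b : ℝ}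
    (ha : a < T) (hb : b < T) :
    ∫ s in a..b, h s / ∫ u in s..T, h u = log (∫ u in a..T, h u) - log (∫ u in b..T, h u) := by
  have htail_pos : ∀ s ∈ uIcc a b, 0 < ∫ u in s..T, h u := fun s hs =>
    integral_tail_pos hh hpos (hs.2.trans_lt (max_lt ha hb))
  have hderiv : ∀ s ∈ uIcc a b,
      HasDerivAt (fun s => -log (∫ u in s..T, h u)) (h s / ∫ u in s..T, h u) s := fun s hs =>
    ((hasDerivAt_integral_tail hh s).log (htail_pos s hs).ne').neg.congr_deriv (by ring)
  have hcont : ContinuousOn (fun s => h s / ∫ u in s..T, h u) (uIcc a b) :=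
    hh.continuousOn.div
      (fun s _ => (hasDerivAt_integral_tail hh s).continuousAt.continuousWithinAt)
      fun s hs => (htail_pos s hs).ne'
  rw [integral_eq_sub_of_hasDerivAt hderiv hcont.intervalIntegrable]
  ring

theorem tendsto_neg_log_integral_tail (hh : Continuous h) (hpos : ∀ x, 0 < h x) :
    Tendsto (fun t => -log (∫ u in t..T, h u)) (𝓝[<] T) atTop := by
  have htail : Tendsto (fun t => ∫ u in t..T, h u) (𝓝[<] T) (𝓝[>] 0) := by
    refine tendsto_nhdsWithin_iff.mpr ⟨?_, eventually_nhdsWithin_of_forall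
      fun t ht => integral_tail_pos hh hpos ht⟩
    have hcont : Continuous fun t => ∫ u in t..T, h u :=
      continuous_iff_continuousAt.mpr fun t => (hasDerivAt_integral_tail hh t).continuousAt
    simpa using (hcont.tendsto T).mono_left nhdsWithin_le_nhds
  exact tendsto_neg_atBot_atTop.comp (tendsto_log_nhdsGT_zero.comp htail)

end IntegralTail

section Annuity

variable {f g : ℝ → ℝ} {T : ℝ}

theorem Bann_congr {t : ℝ} (htT : t ≤ T) (hfg : EqOn f g (Icc t T)) :
    Bann T f t = Bann T g t := by
  refine integral_congr fun u hu => ?_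
  rw [uIcc_of_le htT] at hu
  have hsub : uIcc t u ⊆ Icc t T := by
    rw [uIcc_of_le hu.1]; exact Icc_subset_Icc_right hu.2
  rw [integral_congr fun s hs => hfg (hsub hs)]

theorem Bann_eq_exp_mul (hg : Continuous g) (t : ℝ) :
    Bann T g t = exp (∫ s in 0..t, g s) * ∫ u in t..T, exp (-∫ s in 0..u, g s) := by
  rw [Bann, ← integral_const_mul]
  refine integral_congr fun u _ => ?_
  rw [← integral_interval_sub_left (hg.intervalIntegrable 0 u) (hg.intervalIntegrable 0 t),
    ← exp_add]
  ring_nf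

theorem one_div_Bann (hg : Continuous g) (t : ℝ) :
    1 / Bann T g t = exp (-∫ s in 0..t, g s) / ∫ u in t..T, exp (-∫ s in 0..u, g s) := by
  rw [Bann_eq_exp_mul hg, exp_neg, one_div, mul_inv, div_eq_mul_inv]

end Annuity

/-- For continuous `f : [0,T] → ℝ` and every `t ∈ [0,T)`,
`∫_0^t 1/B_f(s) ds = log(B_f(0)/B_f(t)) + ∫_0^t f(s) ds`, and consequently
`∫_0^t 1/B_f(s) ds → ∞` as `t → T⁻`. -/
theorem Bann_inv_integral (T : ℝ) (hT : 0 < T) (f : ℝ → ℝ)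
    (hf : ContinuousOn f (Icc 0 T)) :
    (∀ t ∈ Ico (0 : ℝ) T,
      ∫ s in (0 : ℝ)..t, 1 / Bann T f s
        = Real.log (Bann T f 0 / Bann T f t) + ∫ s in (0 : ℝ)..t, f s) ∧
    Tendsto (fun t => ∫ s in (0 : ℝ)..t, 1 / Bann T f s)
      (nhdsWithin T (Iio T)) atTop := by
  obtain ⟨g, hg, hfg⟩ := hf.exists_continuous_eqOn_Icc hT.le
  set F : ℝ → ℝ := fun t => ∫ s in 0..t, g s
  set G : ℝ → ℝ := fun t => ∫ u in t..T, exp (-F u)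
  have hh : Continuous fun u => exp (-F u) :=
    continuous_exp.comp (continuous_primitive hg.intervalIntegrable 0).neg
  have hpos : ∀ u, 0 < exp (-F u) := fun u => exp_pos _
  have hB : ∀ t ∈ Icc 0 T, Bann T f t = Bann T g t := fun t ht =>
    Bann_congr ht.2 (hfg.mono (Icc_subset_Icc_left ht.1))
  have hinv : ∀ t ∈ Ico 0 T,
      ∫ s in 0..t, 1 / Bann T f s = log (G 0) - log (G t) := fun t ht => by
    rw [← integral_div_integral_tail hh hpos hT ht.2]
    refine integral_congr fun s hs => ?_
    rw [uIcc_of_le ht.1] at hs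
    rw [hB s ⟨hs.1, hs.2.trans ht.2.le⟩, one_div_Bann hg]
  refine ⟨fun t ht => ?_, ?_⟩
  · have hFt : ∫ s in 0..t, f s = F t :=
      integral_congr fun s hs => hfg (uIcc_subset_Icc ⟨le_rfl, hT.le⟩ ⟨ht.1, ht.2.le⟩ hs)
    have hG_ne : ∀ t < T, G t ≠ 0 := fun t ht => (integral_tail_pos hh hpos ht).ne'
    have hF0 : F 0 = 0 := integral_same
    have hBG : ∀ t ∈ Icc 0 T, Bann T f t = exp (F t) * G t := fun t ht =>
      (hB t ht).trans (Bann_eq_exp_mul hg t)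
    rw [hinv t ht, hBG 0 ⟨le_rfl, hT.le⟩, hBG t ⟨ht.1, ht.2.le⟩, hF0, exp_zero, one_mul, hFt,
      log_div (hG_ne 0 hT) (mul_ne_zero (exp_ne_zero _) (hG_ne t ht.2)),
      log_mul (exp_ne_zero _) (hG_ne t ht.2), log_exp]
    ring
  · refine (tendsto_atTop_add_const_left _ (log (G 0))
      (tendsto_neg_log_integral_tail hh hpos)).congr' ?_
    filter_upwards [Ioo_mem_nhdsLT hT] with t ht
    rw [hinv t ⟨ht.1.le, ht.2⟩, sub_eq_add_neg]
end

section
/- Let T > 0, x_0 > 0, γ > 0, and let r, β : [0,T] → ℝ be continuous. Define f₁(t) = (β(t) − (1−γ)r(t))/γ and B_{f₁}(t) = ∫_t^T exp(−∫_t^u f₁(s) ds) du. Suppose X : [0,T) → ℝ satisfies X(0) = x_0 and X′(t) = X(t)r(t) − c(t) on (0,T), where c(t) = X(t)/B_{f₁}(t) for t ∈ [0,T). Then c is differentiable on (0,T) with c′(t) = c(t)·(r(t) − β(t))/γ, hence c(t) = (x_0/B_{f₁}(0))·exp(∫_0^t (r(s)−β(s))/γ ds) for t ∈ [0,T), and the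 limit c(T) := lim_{t→T⁻} c(t) exists and lies in (0,∞). -/
/-! Factoring `exp (∫_0^t f)` out of the annuity value shows that `B = B_f` solves the linear
equation `B' = f B - 1`. In the quotient `c = X / B` the outflow `-c` in `X'` cancels against
the `-1` in `B'`, so `c' = c (r - f₁) = c (r - β) / γ`. Then `c · exp (-∫_0^t (r - β) / γ)` has
zero derivative, which gives the closed formula, and continuity of the integral up to `T` gives
the limit, positive because `x₀ > 0` and `B(0) > 0`. -/

open Set Filter intervalIntegral

/-- The rate `f₁(t) = (β(t) − (1−γ)r(t))/γ` determining the optimal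
wealth-to-consumption factor of a CRRA utility maximizer. -/
noncomputable def fOne (γ : ℝ) (r β : ℝ → ℝ) : ℝ → ℝ :=
  fun t => (β t - (1 - γ) * r t) / γ

open Real

section Primitive

variable {f : ℝ → ℝ} {a b c : ℝ}

theorem hasDerivAt_integral_of_continuousOn (hf : ContinuousOn f (Icc a b)) (hc : c ∈ Icc a b)
    {t : ℝ} (ht : t ∈ Ioo a b) : HasDerivAt (fun u => ∫ s in c..u, f s) (f t) t :=
  integral_hasDerivAt_right
    ((hf.mono (uIcc_subset_Icc hc (Ioo_subset_Icc_self ht))).intervalIntegrable)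
    ((hf.mono Ioo_subset_Icc_self).stronglyMeasurableAtFilter isOpen_Ioo t ht)
    (hf.continuousAt (Icc_mem_nhds ht.1 ht.2))

theorem continuousOn_integral_of_continuousOn (hf : ContinuousOn f (Icc a b)) (hc : c ∈ Icc a b) :
    ContinuousOn (fun u => ∫ s in c..u, f s) (Icc a b) := by
  have hab : a ≤ b := hc.1.trans hc.2
  rw [← uIcc_of_le hab] at hc ⊢
  exact continuousOn_primitive_interval' (hf.intervalIntegrable_of_Icc hab) hc

end Primitive

section Annuity

variable {T a t : ℝ} {f : ℝ → ℝ}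

theorem Bann_eq_exp_mul_integral (hf : ContinuousOn f (Icc a T)) (ht : t ∈ Icc a T) :
    Bann T f t = exp (∫ s in a..t, f s) * ∫ u in t..T, exp (-∫ s in a..u, f s) := by
  have hint : ∀ v ∈ Icc a T, IntervalIntegrable f MeasureTheory.volume a v := fun v hv =>
    (hf.mono (Icc_subset_Icc_right hv.2)).intervalIntegrable_of_Icc hv.1
  rw [Bann, ← integral_const_mul]
  refine integral_congr fun u hu => ?_
  rw [uIcc_of_le ht.2] at hu
  rw [← integral_interval_sub_left (hint u ⟨ht.1.trans hu.1, hu.2⟩) (hint t ht), ← exp_add]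
  ring_nf

theorem Bann_pos (hf : ContinuousOn f (Icc a T)) (ht : t ∈ Ico a T) : 0 < Bann T f t := by
  have hexp : ContinuousOn (fun u => exp (-∫ s in t..u, f s)) (Icc t T) :=
    ((continuousOn_integral_of_continuousOn hf (Ico_subset_Icc_self ht)).neg.rexp).mono
      (Icc_subset_Icc_left ht.1)
  exact intervalIntegral_pos_of_pos (hexp.intervalIntegrable_of_Icc ht.2.le)
    (fun _ => exp_pos _) ht.2

theorem continuousOn_Bann (hf : ContinuousOn f (Icc a T)) (haT : a ≤ T) :
    ContinuousOn (Bann T f) (Icc a T) := by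
  have hF := continuousOn_integral_of_continuousOn hf (left_mem_Icc.2 haT)
  have hG : ContinuousOn (fun v => ∫ u in v..T, exp (-∫ s in a..u, f s)) (Icc a T) := by
    rw [← uIcc_of_le haT]
    refine continuousOn_primitive_interval_left ?_
    rw [uIcc_of_le haT]
    exact hF.neg.rexp.integrableOn_Icc
  exact (hF.rexp.mul hG).congr fun v hv => Bann_eq_exp_mul_integral hf hv

theorem hasDerivAt_Bann (hf : ContinuousOn f (Icc a T)) (ht : t ∈ Ioo a T) :
    HasDerivAt (Bann T f) (f t * Bann T f t - 1) t := by
  have haT : a ≤ T := ht.1.le.trans ht.2.le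
  set F := fun u => ∫ s in a..u, f s
  have hF : HasDerivAt F (f t) t := hasDerivAt_integral_of_continuousOn hf ⟨le_rfl, haT⟩ ht
  have hE : ContinuousOn (fun u => exp (-F u)) (Icc a T) :=
    (continuousOn_integral_of_continuousOn hf ⟨le_rfl, haT⟩).neg.rexp
  have hG : HasDerivAt (fun v => ∫ u in v..T, exp (-F u)) (-exp (-F t)) t :=
    (hasDerivAt_integral_of_continuousOn hE ⟨haT, le_rfl⟩ ht).neg.congr_of_eventuallyEq
      (Eventually.of_forall fun v => integral_symm T v)
  have hBann : Bann T f =ᶠ[nhds t] fun v => exp (F v) * ∫ u in v..T, exp (-F u) := by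
    filter_upwards [Ioo_mem_nhds ht.1 ht.2] with v hv
    exact Bann_eq_exp_mul_integral hf (Ioo_subset_Icc_self hv)
  refine ((hF.exp.mul hG).congr_of_eventuallyEq hBann).congr_deriv ?_
  rw [Bann_eq_exp_mul_integral hf (Ioo_subset_Icc_self ht), mul_neg, ← exp_add, add_neg_cancel,
    exp_zero]
  ring

end Annuity

theorem hasDerivAt_div_of_annuity {X B : ℝ → ℝ} {ρ φ t : ℝ}
    (hX : HasDerivAt X (X t * ρ - X t / B t) t) (hB : HasDerivAt B (φ * B t - 1) t)
    (hBt : B t ≠ 0) : HasDerivAt (fun u => X u / B u) (X t / B t * (ρ - φ)) t := by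
  refine (hX.div hB hBt).congr_deriv ?_
  field_simp
  ring

theorem sub_fOne {γ : ℝ} (hγ : γ ≠ 0) (r β : ℝ → ℝ) (t : ℝ) :
    r t - fOne γ r β t = (r t - β t) / γ := by
  rw [fOne]
  field_simp
  ring

section LinearODE

variable {k y : ℝ → ℝ} {a b : ℝ}

theorem eq_mul_exp_integral_of_hasDerivAt (hk : ContinuousOn k (Icc a b))
    (hy : ContinuousOn y (Ico a b)) (hy' : ∀ t ∈ Ioo a b, HasDerivAt y (y t * k t) t)
    {t : ℝ} (ht : t ∈ Ico a b) : y t = y a * exp (∫ s in a..t, k s) := by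
  set K := fun u => ∫ s in a..u, k s
  have ha : a ∈ Icc a b := ⟨le_rfl, ht.1.trans ht.2.le⟩
  have hφ : ∀ u ∈ Ioo a b, HasDerivAt (fun v => y v * exp (-K v)) 0 u := by
    intro u hu
    refine ((hy' u hu).mul (hasDerivAt_integral_of_continuousOn hk ha hu).neg.exp).congr_deriv ?_
    ring
  have hconst : y t * exp (-K t) = y a * exp (-K a) := by
    rcases ht.1.eq_or_lt with rfl | hat
    · rfl
    have hcont : ContinuousOn (fun v => y v * exp (-K v)) (Icc a t) :=
      (hy.mono (Icc_subset_Ico_right ht.2)).mul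
        ((continuousOn_integral_of_continuousOn hk ha).mono (Icc_subset_Icc_right ht.2.le)).neg.rexp
    obtain ⟨u, -, hu⟩ := exists_hasDerivAt_eq_slope _ (fun _ => 0) hat hcont
      fun u hu => hφ u ⟨hu.1, hu.2.trans ht.2⟩
    rw [eq_comm, div_eq_zero_iff, sub_eq_zero] at hu
    exact hu.resolve_right (sub_ne_zero.2 hat.ne')
  have hK : K a = 0 := integral_same
  calc y t = y t * exp (-K t) * exp (K t) := by
        rw [mul_assoc, ← exp_add, neg_add_cancel, exp_zero, mul_one]
    _ = y a * exp (K t) := by rw [hconst, hK, neg_zero, exp_zero, mul_one]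

theorem tendsto_mul_exp_integral_nhdsLT (hk : ContinuousOn k (Icc a b)) (hab : a < b) (C : ℝ) :
    Tendsto (fun t => C * exp (∫ s in a..t, k s)) (nhdsWithin b (Iio b))
      (nhds (C * exp (∫ s in a..b, k s))) := by
  have hK := continuousOn_integral_of_continuousOn hk ⟨le_rfl, hab.le⟩ b ⟨hab.le, le_rfl⟩
  rw [← nhdsWithin_Ico_eq_nhdsLT hab]
  exact ((hK.mono Ico_subset_Icc_self).rexp.tendsto).const_mul C

end LinearODE

/-- In the model with deterministic interest rate `r` and no risky assets, the optimal
CRRA consumption stream `c(t) = X(t)/B_{f₁}(t)` satisfies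
`c′(t) = c(t)(r(t) − β(t))/γ`, hence
`c(t) = (x₀/B_{f₁}(0))·exp(∫_0^t (r(s)−β(s))/γ ds)` on `[0,T)`, and
`c(T) := lim_{t→T⁻} c(t)` exists in `(0,∞)`. -/
theorem crra_consumption_dynamics (T : ℝ) (hT : 0 < T)
    (x₀ : ℝ) (hx₀ : 0 < x₀) (γ : ℝ) (hγ : 0 < γ)
    (r β : ℝ → ℝ) (hr : ContinuousOn r (Icc 0 T)) (hβ : ContinuousOn β (Icc 0 T))
    (X c : ℝ → ℝ)
    (hX_cont : ContinuousOn X (Ico 0 T)) (hX0 : X 0 = x₀)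
    (hc_def : ∀ t ∈ Ico (0 : ℝ) T, c t = X t / Bann T (fOne γ r β) t)
    (hX_ode : ∀ t ∈ Ioo (0 : ℝ) T, HasDerivAt X (X t * r t - c t) t) :
    (∀ t ∈ Ioo (0 : ℝ) T, HasDerivAt c (c t * (r t - β t) / γ) t) ∧
    (∀ t ∈ Ico (0 : ℝ) T,
      c t = x₀ / Bann T (fOne γ r β) 0
        * Real.exp (∫ s in (0 : ℝ)..t, (r s - β s) / γ)) ∧
    (∃ L : ℝ, 0 < L ∧ Tendsto c (nhdsWithin T (Iio T)) (nhds L)) := by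
  have hf : ContinuousOn (fOne γ r β) (Icc 0 T) :=
    (hβ.sub (continuousOn_const.mul hr)).div_const γ
  have hk : ContinuousOn (fun s => (r s - β s) / γ) (Icc 0 T) := (hr.sub hβ).div_const γ
  have hc_deriv : ∀ t ∈ Ioo (0 : ℝ) T, HasDerivAt c (c t * (r t - β t) / γ) t := by
    intro t ht
    have hX := hX_ode t ht
    rw [hc_def t (Ioo_subset_Ico_self ht)] at hX ⊢
    refine ((hasDerivAt_div_of_annuity hX (hasDerivAt_Bann hf ht)
      (Bann_pos hf (Ioo_subset_Ico_self ht)).ne').congr_of_eventuallyEq ?_).congr_deriv ?_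
    · filter_upwards [Ioo_mem_nhds ht.1 ht.2] with u hu using hc_def u (Ioo_subset_Ico_self hu)
    · rw [sub_fOne hγ.ne', mul_div_assoc]
  have hc_cont : ContinuousOn c (Ico 0 T) :=
    (hX_cont.div ((continuousOn_Bann hf hT.le).mono Ico_subset_Icc_self)
      fun t ht => (Bann_pos hf ht).ne').congr hc_def
  have hc_formula : ∀ t ∈ Ico (0 : ℝ) T, c t = x₀ / Bann T (fOne γ r β) 0
      * exp (∫ s in (0 : ℝ)..t, (r s - β s) / γ) := by
    intro t ht
    rw [eq_mul_exp_integral_of_hasDerivAt hk hc_cont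
      (fun u hu => by simpa only [mul_div_assoc] using hc_deriv u hu) ht,
      hc_def 0 ⟨le_rfl, hT⟩, hX0]
  refine ⟨hc_deriv, hc_formula, _,
    mul_pos (div_pos hx₀ (Bann_pos hf ⟨le_rfl, hT⟩)) (exp_pos _), (tendsto_mul_exp_integral_nhdsLT hk hT _).congr' ?_⟩
  exact eventuallyEq_of_mem (Ico_mem_nhdsLT hT) fun t ht => (hc_formula t ht).symm
end

section
/- Fix an integer n ≥ 2 and a probability space (Ω, F, P). Let R_1, …, R_n be integrable random variables with values in (−1,∞), let F_i = σ(R_1,…,R_i), let x_0 > 0, and let (a_i)_{i=1,…,n} be an adapted process with a_i > 1 almost surely for i = 1,…,n−1 and a_n ≡ 1. Define X_0 = x_0, C_i = X_{i−1}(1+R_i)/a_i and X_i = X_{i−1}(1+R_i) − C_i for i = 1,…,n, and assume each C_i is integrable. Then (C_i)_{i=1,…,n} is a martingale with respect to (F_i) (i.e., E[C_{i+1} | F_i] = C_i a.s. for i = 1,…,n−1) if and only if E[(1+R_{i+1})/a_{i+1} | F_i] = 1/(a_i − 1) almost surely for every i = 1,…,n−1. -/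
open MeasureTheory

/-- The sigma-algebra `F_i = σ(R_1,…,R_i)` generated by the first `i` returns. -/
def returnFiltration {Ω : Type*} (R : ℕ → Ω → ℝ) (i : ℕ) : MeasurableSpace Ω :=
  ⨆ j ∈ Finset.Icc 1 i, MeasurableSpace.comap (R j) inferInstance

/-- In the discrete-time model, the consumption process `(C_i)` is a martingale with
respect to `(F_i)` if and only if
`E[(1+R_{i+1})/a_{i+1} | F_i] = 1/(a_i − 1)` a.s. for every `i = 1,…,n−1`. -/
theorem discrete_martingale_iff
    {Ω : Type*} [MeasurableSpace Ω] (μ : Measure Ω) [IsProbabilityMeasure μ]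
    (n : ℕ) (hn : 2 ≤ n) (x₀ : ℝ) (hx₀ : 0 < x₀)
    (R a C X : ℕ → Ω → ℝ)
    (hR_meas : ∀ i, Measurable (R i))
    (hR_val : ∀ i ∈ Finset.Icc 1 n, ∀ ω, -1 < R i ω)
    (hR_int : ∀ i ∈ Finset.Icc 1 n, Integrable (R i) μ)
    -- (a_i) is adapted, with a_i > 1 a.s. for i = 1,…,n−1 and a_n ≡ 1
    (ha_adapted : ∀ i ∈ Finset.Icc 1 n, Measurable[returnFiltration R i] (a i))
    (ha_gt_one : ∀ i ∈ Finset.Icc 1 (n - 1), ∀ᵐ ω ∂μ, 1 < a i ω)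
    (ha_n : ∀ ω, a n ω = 1)
    (hX0 : ∀ ω, X 0 ω = x₀)
    (hC : ∀ i ∈ Finset.Icc 1 n, ∀ ω, C i ω = X (i - 1) ω * (1 + R i ω) / a i ω)
    (hX : ∀ i ∈ Finset.Icc 1 n, ∀ ω, X i ω = X (i - 1) ω * (1 + R i ω) - C i ω)
    (hC_int : ∀ i ∈ Finset.Icc 1 n, Integrable (C i) μ) :
    (∀ i ∈ Finset.Icc 1 (n - 1),
        μ[C (i + 1) | returnFiltration R i] =ᵐ[μ] C i) ↔
    (∀ i ∈ Finset.Icc 1 (n - 1),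
        μ[fun ω => (1 + R (i + 1) ω) / a (i + 1) ω | returnFiltration R i]
          =ᵐ[μ] fun ω => 1 / (a i ω - 1)) := by
  -- basic facts about the filtration
  have hle : ∀ i, returnFiltration R i ≤ ‹MeasurableSpace Ω› := by
    intro i
    exact iSup₂_le fun j _ => measurable_iff_comap_le.mp (hR_meas j)
  have hmono : ∀ {i j : ℕ}, i ≤ j → returnFiltration R i ≤ returnFiltration R j := by
    intro i j hij
    refine iSup₂_le fun k hk => ?_
    exact le_iSup₂ (f := fun k (_ : k ∈ Finset.Icc 1 j) =>
      MeasurableSpace.comap (R k) inferInstance) k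
      (Finset.mem_Icc.mpr ⟨(Finset.mem_Icc.mp hk).1, ((Finset.mem_Icc.mp hk).2).trans hij⟩)
  have hRm : ∀ i j : ℕ, 1 ≤ j → j ≤ i → Measurable[returnFiltration R i] (R j) := by
    intro i j h1 h2
    exact measurable_iff_comap_le.mpr (le_iSup₂ (f := fun k (_ : k ∈ Finset.Icc 1 i) =>
      MeasurableSpace.comap (R k) inferInstance) j (Finset.mem_Icc.mpr ⟨h1, h2⟩))
  -- measurability of X and C with respect to the filtration
  have hXCm : ∀ i, i ≤ n → Measurable[returnFiltration R i] (X i) ∧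
      (1 ≤ i → Measurable[returnFiltration R i] (C i)) := by
    intro i
    induction i with
    | zero =>
      intro _
      refine ⟨?_, by omega⟩
      have hX0' : X 0 = fun _ => x₀ := funext hX0
      rw [hX0']; exact measurable_const
    | succ k ih =>
      intro hkn
      have hk : k ≤ n := by omega
      have hmem : k + 1 ∈ Finset.Icc 1 n := Finset.mem_Icc.mpr ⟨by omega, hkn⟩
      have hXk : Measurable[returnFiltration R (k + 1)] (X k) :=
        ((ih hk).1).mono (hmono (Nat.le_succ k)) le_rfl
      have hRk : Measurable[returnFiltration R (k + 1)] (R (k + 1)) :=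
        hRm _ _ (by omega) le_rfl
      have hak := ha_adapted (k + 1) hmem
      have hCk1 : Measurable[returnFiltration R (k + 1)] (C (k + 1)) := by
      
        have hCeq : C (k + 1) = fun ω => X k ω * (1 + R (k + 1) ω) / a (k + 1) ω := by
          funext ω; simpa using hC (k + 1) hmem ω
        rw [hCeq]
        exact (hXk.mul (measurable_const.add hRk)).div hak
      refine ⟨?_, fun _ => hCk1⟩
      have hXeq : X (k + 1) = fun ω => X k ω * (1 + R (k + 1) ω) - C (k + 1) ω := by
        funext ω; simpa using hX (k + 1) hmem ω
      rw [hXeq]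
      exact (hXk.mul (measurable_const.add hRk)).sub hCk1
  -- a.e. all the a_i (i ≤ n-1) exceed 1
  have hpos : ∀ᵐ ω ∂μ, ∀ i, i ∈ Finset.Icc 1 (n - 1) → 1 < a i ω := by
    rw [ae_all_iff]
    intro i
    by_cases h : i ∈ Finset.Icc 1 (n - 1)
    · filter_upwards [ha_gt_one i h] with ω hω _ using hω
    · exact Filter.Eventually.of_forall fun ω hi => absurd hi h
  -- a.e. positivity of wealth
  have hXpos : ∀ᵐ ω ∂μ, ∀ i, i ≤ n - 1 → 0 < X i ω := by
    filter_upwards [hpos] with ω hω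
    intro i
    induction i with
    | zero => intro _; rw [hX0]; exact hx₀
    | succ k ih =>
      intro hk
      have hXk : 0 < X k ω := ih (by omega)
      have hmem : k + 1 ∈ Finset.Icc 1 n := Finset.mem_Icc.mpr ⟨by omega, by omega⟩
      have ha1 : 1 < a (k + 1) ω := hω (k + 1) (Finset.mem_Icc.mpr ⟨by omega, hk⟩)
      have hRpos : -1 < R (k + 1) ω := hR_val (k + 1) hmem ω
      have hXval := hX (k + 1) hmem ω
      have hCval := hC (k + 1) hmem ω
      simp only [Nat.add_sub_cancel] at hXval hCval
      have h1 : 0 < X k ω * (1 + R (k + 1) ω) := mul_pos hXk (by linarith)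
      rw [hXval, hCval]
      exact sub_pos.mpr (div_lt_self h1 ha1)
  -- the key per-index equivalence
  have key : ∀ i ∈ Finset.Icc 1 (n - 1),
      ((μ[C (i + 1) | returnFiltration R i] =ᵐ[μ] C i) ↔
        (μ[fun ω => (1 + R (i + 1) ω) / a (i + 1) ω | returnFiltration R i]
          =ᵐ[μ] fun ω => 1 / (a i ω - 1))) := by
    intro i hi
    obtain ⟨hi1, hi2⟩ := Finset.mem_Icc.mp hi
    have himem : i ∈ Finset.Icc 1 n := Finset.mem_Icc.mpr ⟨hi1, by omega⟩
    have hi1mem : i + 1 ∈ Finset.Icc 1 n := Finset.mem_Icc.mpr ⟨by omega, by omega⟩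
    set Y : Ω → ℝ := fun ω => (1 + R (i + 1) ω) / a (i + 1) ω with hYdef
    set f : Ω → ℝ := fun ω => C i ω * (a i ω - 1) with hfdef
    -- a_{i+1} ≥ 1 a.e.
    have ha1ge : ∀ᵐ ω ∂μ, 1 ≤ a (i + 1) ω := by
      rcases eq_or_lt_of_le (show i + 1 ≤ n by omega) with h | h
      · exact Filter.Eventually.of_forall fun ω => by rw [← h] at ha_n; rw [ha_n ω]
      · filter_upwards [hpos] with ω hω
        exact le_of_lt (hω (i + 1) (Finset.mem_Icc.mpr ⟨by omega, by omega⟩))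
    -- Y is integrable
    have haYmeas : Measurable (a (i + 1)) :=
      (ha_adapted (i + 1) hi1mem).mono (hle (i + 1)) le_rfl
    have hYmeas : Measurable Y :=
      (measurable_const.add (hR_meas (i + 1))).div haYmeas
    have hY_int : Integrable Y μ := by
      refine Integrable.mono' ((integrable_const (1 : ℝ)).add (hR_int (i + 1) hi1mem))
        hYmeas.aestronglyMeasurable ?_
      filter_upwards [ha1ge] with ω hω
      have hRpos : 0 < 1 + R (i + 1) ω := by linarith [hR_val (i + 1) hi1mem ω]
      have hYpos : 0 < Y ω := div_pos hRpos (by linarith)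
      rw [Real.norm_eq_abs, abs_of_pos hYpos]
      exact div_le_self (le_of_lt hRpos) hω
    -- f is F_i-strongly measurable
    have hf_meas : StronglyMeasurable[returnFiltration R i] f :=
      (((hXCm i (by omega)).2 hi1).mul
        ((ha_adapted i himem).sub measurable_const)).stronglyMeasurable
    -- a.e. facts: C i > 0, a i > 1, C (i+1) = f * Y
    have hCpos : ∀ᵐ ω ∂μ, 0 < C i ω ∧ 1 < a i ω := by
      filter_upwards [hpos, hXpos] with ω hω hXω
      have ha1 : 1 < a i ω := hω i hi
      have hXprev : 0 < X (i - 1) ω := hXω (i - 1) (by omega)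
      have hRpos : 0 < 1 + R i ω := by linarith [hR_val i himem ω]
      refine ⟨?_, ha1⟩
      rw [hC i himem ω]
      exact div_pos (mul_pos hXprev hRpos) (by linarith)
    have hfY : C (i + 1) =ᵐ[μ] f * Y := by
      filter_upwards [hpos, hXpos] with ω hω hXω
      have ha1 : 1 < a i ω := hω i hi
      have hane : a i ω ≠ 0 := by linarith
      have hCval := hC i himem ω
      have hXval := hX i himem ω
      -- X i ω = C i ω * a i ω - C i ω
      have hXa : X (i - 1) ω * (1 + R i ω) = C i ω * a i ω := by
        rw [hCval]; field_simp
      have hXi : X i ω = f ω := by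
        rw [hXval, hXa, hfdef]; ring
      have hCi1 := hC (i + 1) hi1mem ω
      simp only [Nat.add_sub_cancel] at hCi1
      show C (i + 1) ω = f ω * Y ω
      rw [hCi1, hXi, hYdef]
      ring
    -- pull-out property
    have hfY_int : Integrable (f * Y) μ := (hC_int (i + 1) hi1mem).congr hfY
    have hpull : μ[C (i + 1) | returnFiltration R i]
        =ᵐ[μ] f * μ[Y | returnFiltration R i] :=
      (condExp_congr_ae hfY).trans (condExp_mul_of_stronglyMeasurable_left hf_meas hfY_int hY_int)
    constructor
    · intro h
      have h' : f * μ[Y | returnFiltration R i] =ᵐ[μ] C i := hpull.symm.trans h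
      filter_upwards [h', hCpos] with ω hω ⟨hCp, hap⟩
      have hCne : C i ω ≠ 0 := ne_of_gt hCp
      have hane : a i ω - 1 ≠ 0 := by linarith
      have : C i ω * (a i ω - 1) * (μ[Y | returnFiltration R i]) ω = C i ω := hω
      field_simp at this ⊢
      nlinarith [this]
    · intro h
      refine hpull.trans ?_
      filter_upwards [h, hCpos] with ω hω ⟨hCp, hap⟩
      have hane : a i ω - 1 ≠ 0 := by linarith
      show f ω * (μ[Y | returnFiltration R i]) ω = C i ω
      rw [hω, hfdef]
      field_simp
  exact ⟨fun h i hi => (key i hi).mp (h i hi), fun h i hi => (key i hi).mpr (h i hi)⟩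
end

section
/- Fix an integer n ≥ 2 and a probability space (Ω, F, P). Let R_1, …, R_n be integrable random variables with values in (−1,∞), let F_i = σ(R_1,…,R_i), and let x_0 > 0. Define recursively a_n ≡ 1 and, for i = n−1, …, 1, a_i = 1 + 1/E[(1+R_{i+1})/a_{i+1} | F_i]. Then a_i is F_i-measurable with a_i > 1 almost surely for i = 1,…,n−1, and the consumption process defined by X_0 = x_0, C_i = X_{i−1}(1+R_i)/a_i, X_i = X_{i−1}(1+R_i) − C_i (i = 1,…,n) satisfies E[C_{i+1} | F_i] = C_i almost surely for every i = 1,…,n−1, provided each C_i is integrable; i.e., a martingale consumption strategy exists in discrete time. -/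
/-!
Backward induction on `i`: if `a_{i+1} ≥ 1` a.s., then `0 < (1 + R_{i+1}) / a_{i+1} ≤ 1 + R_{i+1}`
is integrable, so its conditional expectation `g_i` given `F_i` is a.s. positive and
`a_i = 1 + 1 / g_i > 1`. For the martingale property, `C_{i+1} = X_i (1 + R_{i+1}) / a_{i+1}`
with `X_i` `F_i`-measurable, so `E[C_{i+1} | F_i] = X_i g_i`; and `X_i = C_i (a_i - 1) = C_i / g_i`.
-/

open MeasureTheory

section

variable {Ω : Type*} {m m0 : MeasurableSpace Ω} {μ : Measure Ω}

theorem ae_pos_condExp_of_ae_pos [IsFiniteMeasure μ] (hm : m ≤ m0) {f : Ω → ℝ}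
    (hf : Integrable f μ) (hpos : ∀ᵐ ω ∂μ, 0 < f ω) :
    ∀ᵐ ω ∂μ, 0 < μ[f | m] ω := by
  set A := {ω | μ[f | m] ω ≤ 0}
  have hA : MeasurableSet[m] A :=
    measurableSet_le stronglyMeasurable_condExp.measurable measurable_const
  have hf_nonneg : 0 ≤ᵐ[μ.restrict A] f := ae_restrict_of_ae (hpos.mono fun _ h => h.le)
  have h_int_zero : ∫ ω in A, f ω ∂μ = 0 := by
    refine le_antisymm ?_ (setIntegral_nonneg_ae (hm _ hA) (hpos.mono fun _ h _ => h.le))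
    rw [← setIntegral_condExp hm hf hA]
    exact setIntegral_nonpos (hm _ hA) fun _ h => h
  have hf_zero : f =ᵐ[μ.restrict A] 0 :=
    (setIntegral_eq_zero_iff_of_nonneg_ae hf_nonneg hf.integrableOn).1 h_int_zero
  have h_not_mem : ∀ᵐ ω ∂μ, ω ∈ A → False := by
    rw [← ae_restrict_iff' (hm _ hA)]
    filter_upwards [hf_zero, ae_restrict_of_ae hpos] with ω h0 hp using hp.ne' h0
  filter_upwards [h_not_mem] with ω h using not_le.1 h

theorem MeasureTheory.Integrable.div_of_one_le {g a : Ω → ℝ} (hg : Integrable g μ)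
    (ha : AEMeasurable a μ) (ha1 : ∀ᵐ ω ∂μ, 1 ≤ a ω) :
    Integrable (fun ω => g ω / a ω) μ := by
  refine hg.mono (hg.aemeasurable.div ha).aestronglyMeasurable ?_
  filter_upwards [ha1] with ω h
  rw [norm_div]
  exact div_le_self (norm_nonneg _) (h.trans (Real.le_norm_self _))

end

section ReturnFiltration

variable {Ω : Type*} {R : ℕ → Ω → ℝ}

theorem returnFiltration_le [m0 : MeasurableSpace Ω] (hR : ∀ i, Measurable (R i)) (i : ℕ) :
    returnFiltration R i ≤ m0 :=
  iSup₂_le fun j _ => (hR j).comap_le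

theorem returnFiltration_mono : Monotone (returnFiltration R) := fun _ _ hij =>
  biSup_mono fun _ hk => Finset.Icc_subset_Icc_right hij hk

theorem measurable_returnFiltration {i : ℕ} (hi : 1 ≤ i) :
    Measurable[returnFiltration R i] (R i) :=
  Measurable.of_comap_le <| le_iSup₂ (f := fun j (_ : j ∈ Finset.Icc 1 i) =>
    MeasurableSpace.comap (R j) inferInstance) i (Finset.mem_Icc.2 ⟨hi, le_rfl⟩)

end ReturnFiltration

/-- Consumption at `t_{i+1}` per unit of wealth held at `t_i`:
`C_{i+1} = X_i · consumptionRate R a i`. -/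
noncomputable def consumptionRate {Ω : Type*} (R a : ℕ → Ω → ℝ) (i : ℕ) (ω : Ω) : ℝ :=
  (1 + R (i + 1) ω) / a (i + 1) ω

section WealthFactor

variable {Ω : Type*} [MeasurableSpace Ω] {μ : Measure Ω} {n : ℕ} {R a : ℕ → Ω → ℝ}

theorem stronglyMeasurable_wealthFactor
    (ha_rec : ∀ i ∈ Finset.Icc 1 (n - 1),
      a i = fun ω => 1 + 1 / μ[consumptionRate R a i | returnFiltration R i] ω)
    {i : ℕ} (hi : i ∈ Finset.Icc 1 (n - 1)) :
    StronglyMeasurable[returnFiltration R i] (a i) := by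
  rw [ha_rec i hi]
  exact (measurable_const.add
    (measurable_const.div stronglyMeasurable_condExp.measurable)).stronglyMeasurable

theorem one_lt_wealthFactor
    (ha_rec : ∀ i ∈ Finset.Icc 1 (n - 1),
      a i = fun ω => 1 + 1 / μ[consumptionRate R a i | returnFiltration R i] ω)
    {i : ℕ} (hi : i ∈ Finset.Icc 1 (n - 1))
    (hpos : ∀ᵐ ω ∂μ, 0 < μ[consumptionRate R a i | returnFiltration R i] ω) :
    ∀ᵐ ω ∂μ, 1 < a i ω := by
  filter_upwards [hpos] with ω hω
  rw [ha_rec i hi]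
  exact lt_add_of_pos_right 1 (one_div_pos.2 hω)

theorem consumptionRate_integrable_condExp_pos_of_one_le [IsFiniteMeasure μ]
    (hR_meas : ∀ i, Measurable (R i)) {i : ℕ} (hR_val : ∀ ω, -1 < R (i + 1) ω)
    (hR_int : Integrable (R (i + 1)) μ)
    (ha_meas : Measurable (a (i + 1))) (ha : ∀ᵐ ω ∂μ, 1 ≤ a (i + 1) ω) :
    Integrable (consumptionRate R a i) μ ∧
      ∀ᵐ ω ∂μ, 0 < μ[consumptionRate R a i | returnFiltration R i] ω := by
  have hint : Integrable (consumptionRate R a i) μ :=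
    ((integrable_const 1).add hR_int).div_of_one_le ha_meas.aemeasurable ha
  refine ⟨hint, ae_pos_condExp_of_ae_pos (returnFiltration_le hR_meas i) hint ?_⟩
  filter_upwards [ha] with ω h
  exact div_pos (by linarith [hR_val ω]) (by linarith)

theorem measurable_and_one_le_wealthFactor [IsFiniteMeasure μ] (hR_meas : ∀ i, Measurable (R i))
    (hR_val : ∀ i ∈ Finset.Icc 1 n, ∀ ω, -1 < R i ω)
    (hR_int : ∀ i ∈ Finset.Icc 1 n, Integrable (R i) μ)
    (ha_n : a n = fun _ => 1)
    (ha_rec : ∀ i ∈ Finset.Icc 1 (n - 1),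
      a i = fun ω => 1 + 1 / μ[consumptionRate R a i | returnFiltration R i] ω)
    {i : ℕ} (hi : i ∈ Finset.Icc 1 n) : Measurable (a i) ∧ ∀ᵐ ω ∂μ, 1 ≤ a i ω := by
  obtain ⟨hi1, hin⟩ := Finset.mem_Icc.1 hi
  clear hi
  induction hin using Nat.decreasingInduction with
  | self => rw [ha_n]; exact ⟨measurable_const, ae_of_all _ fun _ => le_rfl⟩
  | of_succ k hk ih =>
    have hk' : k ∈ Finset.Icc 1 (n - 1) := Finset.mem_Icc.2 ⟨hi1, by omega⟩
    have hk1 : k + 1 ∈ Finset.Icc 1 n := Finset.mem_Icc.2 ⟨by omega, hk⟩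
    obtain ⟨ha_meas, ha⟩ := ih (by omega)
    have hpos := (consumptionRate_integrable_condExp_pos_of_one_le hR_meas (hR_val _ hk1)
      (hR_int _ hk1) ha_meas ha).2
    exact ⟨(stronglyMeasurable_wealthFactor ha_rec hk').measurable.mono
        (returnFiltration_le hR_meas k) le_rfl,
      (one_lt_wealthFactor ha_rec hk' hpos).mono fun _ h => h.le⟩

theorem consumptionRate_integrable_condExp_pos [IsFiniteMeasure μ]
    (hR_meas : ∀ i, Measurable (R i))
    (hR_val : ∀ i ∈ Finset.Icc 1 n, ∀ ω, -1 < R i ω)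
    (hR_int : ∀ i ∈ Finset.Icc 1 n, Integrable (R i) μ)
    (ha_n : a n = fun _ => 1)
    (ha_rec : ∀ i ∈ Finset.Icc 1 (n - 1),
      a i = fun ω => 1 + 1 / μ[consumptionRate R a i | returnFiltration R i] ω)
    {i : ℕ} (hi : i ∈ Finset.Icc 1 (n - 1)) :
    Integrable (consumptionRate R a i) μ ∧
      ∀ᵐ ω ∂μ, 0 < μ[consumptionRate R a i | returnFiltration R i] ω := by
  have hi1 : i + 1 ∈ Finset.Icc 1 n := by
    obtain ⟨hi1, hin⟩ := Finset.mem_Icc.1 hi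
    exact Finset.mem_Icc.2 ⟨by omega, by omega⟩
  obtain ⟨ha_meas, ha⟩ :=
    measurable_and_one_le_wealthFactor hR_meas hR_val hR_int ha_n ha_rec hi1
  exact consumptionRate_integrable_condExp_pos_of_one_le hR_meas (hR_val _ hi1) (hR_int _ hi1)
    ha_meas ha

end WealthFactor

section Consumption

variable {Ω : Type*} [MeasurableSpace Ω] {μ : Measure Ω} {n : ℕ} {x₀ : ℝ}
  {R a C X : ℕ → Ω → ℝ}

theorem measurable_wealth
    (ha_rec : ∀ i ∈ Finset.Icc 1 (n - 1),
      a i = fun ω => 1 + 1 / μ[consumptionRate R a i | returnFiltration R i] ω)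
    (hX0 : ∀ ω, X 0 ω = x₀)
    (hC : ∀ i ∈ Finset.Icc 1 n, ∀ ω, C i ω = X (i - 1) ω * (1 + R i ω) / a i ω)
    (hX : ∀ i ∈ Finset.Icc 1 n, ∀ ω, X i ω = X (i - 1) ω * (1 + R i ω) - C i ω) :
    ∀ j ≤ n - 1, Measurable[returnFiltration R j] (X j) := by
  intro j
  induction j with
  | zero =>
    intro _
    rw [funext hX0]
    exact measurable_const
  | succ j ih =>
    intro hj
    have hj_mem : j + 1 ∈ Finset.Icc 1 n := Finset.mem_Icc.2 ⟨by omega, by omega⟩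
    have hX_succ : X (j + 1) = fun ω =>
        X j ω * (1 + R (j + 1) ω) - X j ω * (1 + R (j + 1) ω) / a (j + 1) ω := by
      funext ω
      rw [hX _ hj_mem, hC _ hj_mem, Nat.add_sub_cancel]
    have hXj := (ih (by omega)).mono (returnFiltration_mono j.le_succ) le_rfl
    have hgrowth : Measurable[returnFiltration R (j + 1)] fun ω => X j ω * (1 + R (j + 1) ω) :=
      hXj.mul (measurable_const.add (measurable_returnFiltration j.succ_pos))
    have ha := (stronglyMeasurable_wealthFactor ha_rec
      (Finset.mem_Icc.2 ⟨j.succ_pos, hj⟩)).measurable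
    rw [hX_succ]
    exact hgrowth.sub (hgrowth.div ha)

theorem condExp_consumption_succ [IsFiniteMeasure μ] (hR_meas : ∀ i, Measurable (R i))
    (hR_val : ∀ i ∈ Finset.Icc 1 n, ∀ ω, -1 < R i ω)
    (hR_int : ∀ i ∈ Finset.Icc 1 n, Integrable (R i) μ)
    (ha_n : a n = fun _ => 1)
    (ha_rec : ∀ i ∈ Finset.Icc 1 (n - 1),
      a i = fun ω => 1 + 1 / μ[consumptionRate R a i | returnFiltration R i] ω)
    (hX0 : ∀ ω, X 0 ω = x₀)
    (hC : ∀ i ∈ Finset.Icc 1 n, ∀ ω, C i ω = X (i - 1) ω * (1 + R i ω) / a i ω)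
    (hX : ∀ i ∈ Finset.Icc 1 n, ∀ ω, X i ω = X (i - 1) ω * (1 + R i ω) - C i ω)
    (hC_int : ∀ i ∈ Finset.Icc 1 n, Integrable (C i) μ)
    {i : ℕ} (hi : i ∈ Finset.Icc 1 (n - 1)) :
    μ[C (i + 1) | returnFiltration R i] =ᵐ[μ] C i := by
  obtain ⟨hi1, hin⟩ := Finset.mem_Icc.1 hi
  have hi_mem : i ∈ Finset.Icc 1 n := Finset.mem_Icc.2 ⟨hi1, by omega⟩
  have hi1_mem : i + 1 ∈ Finset.Icc 1 n := Finset.mem_Icc.2 ⟨by omega, by omega⟩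
  obtain ⟨hrate_int, hrate_pos⟩ :=
    consumptionRate_integrable_condExp_pos hR_meas hR_val hR_int ha_n ha_rec hi
  have hC_succ : C (i + 1) = X i * consumptionRate R a i := funext fun ω => by
    rw [hC _ hi1_mem, Nat.add_sub_cancel, Pi.mul_apply, consumptionRate, mul_div_assoc]
  have hX_meas : StronglyMeasurable[returnFiltration R i] (X i) :=
    (measurable_wealth ha_rec hX0 hC hX i hin).stronglyMeasurable
  calc μ[C (i + 1) | returnFiltration R i]
      = μ[X i * consumptionRate R a i | returnFiltration R i] := by rw [hC_succ]
    _ =ᵐ[μ] X i * μ[consumptionRate R a i | returnFiltration R i] :=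
      condExp_mul_of_stronglyMeasurable_left hX_meas (hC_succ ▸ hC_int _ hi1_mem) hrate_int
    _ =ᵐ[μ] C i := by
      filter_upwards [hrate_pos] with ω hg
      rw [Pi.mul_apply, hX i hi_mem, hC i hi_mem, congrFun (ha_rec i hi) ω]
      field_simp
      ring

end Consumption

theorem discrete_martingale_consumption_exists_general
    {Ω : Type*} [MeasurableSpace Ω] (μ : Measure Ω) [IsProbabilityMeasure μ]
    (n : ℕ) (x₀ : ℝ)
    (R a C X : ℕ → Ω → ℝ)
    (hR_meas : ∀ i, Measurable (R i))
    (hR_val : ∀ i ∈ Finset.Icc 1 n, ∀ ω, -1 < R i ω)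
    (hR_int : ∀ i ∈ Finset.Icc 1 n, Integrable (R i) μ)
    (ha_n : a n = fun _ => 1)
    (ha_rec : ∀ i ∈ Finset.Icc 1 (n - 1),
      a i = fun ω =>
        1 + 1 / (MeasureTheory.condExp (returnFiltration R i) μ
          (fun ω' => (1 + R (i + 1) ω') / a (i + 1) ω') ω))
    (hX0 : ∀ ω, X 0 ω = x₀)
    (hC : ∀ i ∈ Finset.Icc 1 n, ∀ ω, C i ω = X (i - 1) ω * (1 + R i ω) / a i ω)
    (hX : ∀ i ∈ Finset.Icc 1 n, ∀ ω, X i ω = X (i - 1) ω * (1 + R i ω) - C i ω)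
    (hC_int : ∀ i ∈ Finset.Icc 1 n, Integrable (C i) μ) :
    (∀ i ∈ Finset.Icc 1 (n - 1),
      StronglyMeasurable[returnFiltration R i] (a i) ∧ ∀ᵐ ω ∂μ, 1 < a i ω) ∧
    (∀ i ∈ Finset.Icc 1 (n - 1),
      μ[C (i + 1) | returnFiltration R i] =ᵐ[μ] C i) :=
  ⟨fun _ hi => ⟨stronglyMeasurable_wealthFactor ha_rec hi, one_lt_wealthFactor ha_rec hi
      (consumptionRate_integrable_condExp_pos hR_meas hR_val hR_int ha_n ha_rec hi).2⟩,
    fun _ hi => condExp_consumption_succ hR_meas hR_val hR_int ha_n ha_rec hX0 hC hX hC_int hi⟩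

/-- Existence of a martingale consumption strategy in discrete time: with the
wealth-to-consumption factors defined recursively by `a_n ≡ 1` and
`a_i = 1 + 1/E[(1+R_{i+1})/a_{i+1} | F_i]`, each `a_i` is `F_i`-measurable with
`a_i > 1` a.s., and the resulting consumption process satisfies
`E[C_{i+1} | F_i] = C_i` a.s. for `i = 1,…,n−1`, provided each `C_i` is integrable. -/
theorem discrete_martingale_consumption_exists
    {Ω : Type*} [MeasurableSpace Ω] (μ : Measure Ω) [IsProbabilityMeasure μ]
    (n : ℕ) (hn : 2 ≤ n) (x₀ : ℝ) (hx₀ : 0 < x₀)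
    (R a C X : ℕ → Ω → ℝ)
    (hR_meas : ∀ i, Measurable (R i))
    (hR_val : ∀ i ∈ Finset.Icc 1 n, ∀ ω, -1 < R i ω)
    (hR_int : ∀ i ∈ Finset.Icc 1 n, Integrable (R i) μ)
    (ha_n : a n = fun _ => 1)
    (ha_rec : ∀ i ∈ Finset.Icc 1 (n - 1),
      a i = fun ω =>
        1 + 1 / (MeasureTheory.condExp (returnFiltration R i) μ
          (fun ω' => (1 + R (i + 1) ω') / a (i + 1) ω') ω))
    (hX0 : ∀ ω, X 0 ω = x₀)
    (hC : ∀ i ∈ Finset.Icc 1 n, ∀ ω, C i ω = X (i - 1) ω * (1 + R i ω) / a i ω)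
    (hX : ∀ i ∈ Finset.Icc 1 n, ∀ ω, X i ω = X (i - 1) ω * (1 + R i ω) - C i ω)
    (hC_int : ∀ i ∈ Finset.Icc 1 n, Integrable (C i) μ) :
    (∀ i ∈ Finset.Icc 1 (n - 1),
      StronglyMeasurable[returnFiltration R i] (a i) ∧ ∀ᵐ ω ∂μ, 1 < a i ω) ∧
    (∀ i ∈ Finset.Icc 1 (n - 1),
      μ[C (i + 1) | returnFiltration R i] =ᵐ[μ] C i) :=
  discrete_martingale_consumption_exists_general μ n x₀ R a C X hR_meas hR_val hR_int ha_n ha_rec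
    hX0 hC hX hC_int
end

section
/- Let T > 0 and let g, h : [0,T] × [0,T] → ℝ be continuous functions that are continuously differentiable in the first variable, with g(t,t) = 1 for all t ∈ [0,T]. For (t,r) ∈ [0,T] × ℝ define a(t,r) = ∫_t^T exp(−∫_t^u (r·g(t,s) + h(t,s)) ds) du. Then for every (t,r) ∈ (0,T) × ℝ, the partial derivative of a with respect to t exists and equals ∂a/∂t(t,r) = (r + h(t,t))·a(t,r) − 1 − H₁(t,r) − H₂(t,r), where H₁(t,r) = ∫_t^T exp(−∫_t^u (r·g(t,s)+h(t,s)) ds)·(∫_t^u r·(∂g/∂t)(t,s) ds) du and H₂(t,r) = ∫_t^T exp(−∫_t^u (r·g(t,s)+h(t,s)) ds)·(∫_t^u (∂h/∂t)(t,s) ds) du. -/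
open Set intervalIntegral MeasureTheory Filter Topology Metric
open scoped Interval

/-!
Leibniz rule with a moving lower limit: for `F` continuous on a square, with continuous
`τ`-derivative `F'`, split
`∫_τ^u F(τ,·) = ∫_τ^t F(t,·) + ∫_τ^t (F(τ,·) - F(t,·)) + ∫_t^u F(τ,·)`.
The first term has derivative `-F(t,t)` by the fundamental theorem of calculus, the second is
`o(τ - t)` by uniform continuity of `F` on the square, and the third is differentiated under
the integral sign by dominated convergence. Applied to the inner integral and then, through
`exp`, to the outer one, it gives for `e(t,u) = exp(-∫_t^u f(t,s) ds)`
`d/dt ∫_t^T e(t,u) du = f(t,t) ∫_t^T e(t,u) du - e(t,t) - ∫_t^T e(t,u) ∫_t^u f'(t,s) ds du`,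
with `e(t,t) = 1`; for `f = r g + h` and `g(t,t) = 1` this is the claimed formula.
-/

section Leibniz

variable {E : Type*} [NormedAddCommGroup E] [NormedSpace ℝ E] {F F' : ℝ → ℝ → E}
  {a b : ℝ}

theorem continuousOn_intervalIntegral_param
    (hF : ContinuousOn (fun p : ℝ × ℝ => F p.1 p.2) (Icc a b ×ˢ Icc a b)) :
    ContinuousOn (fun p : ℝ × ℝ => ∫ s in p.1..p.2, F p.1 s) (Icc a b ×ˢ Icc a b) := by
  rcases lt_or_ge b a with hba | hab
  · simp [Icc_eq_empty_of_lt hba]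
  -- Clamping both variables into `[a, b]` extends `F` continuously to the whole plane.
  set c : ℝ → ℝ := fun x => projIcc a b hab x
  have hc : Continuous c := continuous_subtype_val.comp continuous_projIcc
  set G : ℝ → ℝ → E := fun x s => F (c x) (c s)
  have hG : Continuous (Function.uncurry G) :=
    hF.comp_continuous (hc.prodMap hc) fun p =>
      ⟨(projIcc a b hab p.1).2, (projIcc a b hab p.2).2⟩
  have hprim : ∀ {x : ℝ × ℝ → ℝ}, Continuous x →
      Continuous fun p : ℝ × ℝ => ∫ s in a..x p, G p.1 s := fun hx =>
    continuous_parametric_intervalIntegral_of_continuous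
      (f := fun (p : ℝ × ℝ) (s : ℝ) => G p.1 s)
      (hG.comp (continuous_fst.fst.prodMk continuous_snd)) hx
  have hGint : Continuous (fun p : ℝ × ℝ => ∫ s in p.1..p.2, G p.1 s) :=
    ((hprim continuous_snd).sub (hprim continuous_fst)).congr fun p =>
      integral_interval_sub_left ((hG.uncurry_left p.1).intervalIntegrable _ _)
        ((hG.uncurry_left p.1).intervalIntegrable _ _)
  refine hGint.continuousOn.congr fun p hp => integral_congr fun s hs => ?_
  simp [G, c, projIcc_of_mem, hp.1, uIcc_subset_Icc hp.1 hp.2 hs]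

theorem hasDerivAt_intervalIntegral_param_sub_zero
    (hF : ContinuousOn (fun p : ℝ × ℝ => F p.1 p.2) (Icc a b ×ˢ Icc a b))
    {t : ℝ} (ht : t ∈ Ioo a b) :
    HasDerivAt (fun τ => ∫ s in τ..t, (F τ s - F t s)) 0 t := by
  rw [hasDerivAt_iff_isLittleO, Asymptotics.isLittleO_iff]
  intro ε hε
  have hnhds : Icc a b ∈ 𝓝 t := Icc_mem_nhds ht.1 ht.2
  obtain ⟨v, hv, hclose⟩ := isCompact_Icc.mem_uniformity_of_prod (f := F) hF
    (Ioo_subset_Icc_self ht) (dist_mem_uniformity hε)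
  rw [nhdsWithin_eq_nhds.2 hnhds] at hv
  filter_upwards [hv, hnhds] with τ hτv hτ
  have hbound : ∀ s ∈ Ι τ t, ‖F τ s - F t s‖ ≤ ε := fun s hs => by
    rw [← dist_eq_norm]
    exact (hclose τ hτv s
      (uIcc_subset_Icc hτ (Ioo_subset_Icc_self ht) (uIoc_subset_uIcc hs))).le
  simpa [abs_sub_comm] using norm_integral_le_of_norm_le_const hbound

theorem hasDerivAt_intervalIntegral_param
    (hF : ContinuousOn (fun p : ℝ × ℝ => F p.1 p.2) (Icc a b ×ˢ Icc a b))
    (hF' : ContinuousOn (fun p : ℝ × ℝ => F' p.1 p.2) (Icc a b ×ˢ Icc a b))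
    (hderiv : ∀ s ∈ Icc a b, ∀ τ ∈ Ioo a b, HasDerivAt (fun σ => F σ s) (F' τ s) τ)
    {t c u : ℝ} (ht : t ∈ Ioo a b) (hc : c ∈ Icc a b) (hu : u ∈ Icc a b) :
    HasDerivAt (fun τ => ∫ s in c..u, F τ s) (∫ s in c..u, F' t s) t := by
  obtain ⟨M, hM⟩ := (isCompact_Icc.prod isCompact_Icc).exists_bound_of_continuousOn hF'
  have hsub : Ι c u ⊆ Icc a b := uIoc_subset_uIcc.trans (uIcc_subset_Icc hc hu)
  have hmeas : ∀ {G : ℝ → ℝ → E},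
      ContinuousOn (fun p : ℝ × ℝ => G p.1 p.2) (Icc a b ×ˢ Icc a b) →
      ∀ τ ∈ Icc a b, AEStronglyMeasurable (G τ) (volume.restrict (Ι c u)) := fun hG τ hτ =>
    ((hG.uncurry_left τ hτ).mono hsub).aestronglyMeasurable measurableSet_uIoc
  have htI := Ioo_subset_Icc_self ht
  refine (hasDerivAt_integral_of_dominated_loc_of_deriv_le (bound := fun _ => M)
    (Ioo_mem_nhds ht.1 ht.2) ?_ ?_ (hmeas hF' t htI) ?_ intervalIntegrable_const ?_).2
  · filter_upwards [Icc_mem_nhds ht.1 ht.2] with τ hτ using hmeas hF τ hτ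
  · exact ((hF.uncurry_left t htI).mono (uIcc_subset_Icc hc hu)).intervalIntegrable
  · exact ae_of_all _ fun s hs τ hτ => hM (τ, s) ⟨Ioo_subset_Icc_self hτ, hsub hs⟩
  · exact ae_of_all _ fun s hs τ hτ => hderiv s (hsub hs) τ hτ

variable [CompleteSpace E]

theorem hasDerivAt_intervalIntegral_param_lowerLimit
    (hF : ContinuousOn (fun p : ℝ × ℝ => F p.1 p.2) (Icc a b ×ˢ Icc a b))
    (hF' : ContinuousOn (fun p : ℝ × ℝ => F' p.1 p.2) (Icc a b ×ˢ Icc a b))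
    (hderiv : ∀ s ∈ Icc a b, ∀ τ ∈ Ioo a b, HasDerivAt (fun σ => F σ s) (F' τ s) τ)
    {t u : ℝ} (ht : t ∈ Ioo a b) (hu : u ∈ Icc a b) :
    HasDerivAt (fun τ => ∫ s in τ..u, F τ s) (-F t t + ∫ s in t..u, F' t s) t := by
  have htI := Ioo_subset_Icc_self ht
  have hint : ∀ τ ∈ Icc a b, ∀ c ∈ Icc a b, ∀ d ∈ Icc a b,
      IntervalIntegrable (F τ) volume c d := fun τ hτ c hc d hd =>
    ((hF.uncurry_left τ hτ).mono (uIcc_subset_Icc hc hd)).intervalIntegrable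
  have hsplit : ∀ᶠ τ in 𝓝 t, ∫ s in τ..u, F τ s =
      (∫ s in τ..t, F t s) + (∫ s in τ..t, (F τ s - F t s)) + ∫ s in t..u, F τ s := by
    filter_upwards [Icc_mem_nhds ht.1 ht.2] with τ hτ
    rw [integral_sub (hint τ hτ τ hτ t htI) (hint t htI τ hτ t htI), add_sub_cancel,
      integral_add_adjacent_intervals (hint τ hτ τ hτ t htI) (hint τ hτ t htI u hu)]
  have hFt : ContinuousOn (F t) (Icc a b) := hF.uncurry_left t htI
  have hdiag : HasDerivAt (fun τ => ∫ s in τ..t, F t s) (-F t t) t :=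
    integral_hasDerivAt_left (hint t htI t htI t htI)
      ((hFt.mono Ioo_subset_Icc_self).stronglyMeasurableAtFilter isOpen_Ioo t ht)
      (hFt.continuousAt (Icc_mem_nhds ht.1 ht.2))
  have := (hdiag.add (hasDerivAt_intervalIntegral_param_sub_zero hF ht)).add
    (hasDerivAt_intervalIntegral_param hF hF' hderiv ht htI hu)
  rw [add_zero] at this
  exact this.congr_of_eventuallyEq hsplit

end Leibniz

theorem hasDerivAt_integral_exp_neg_integral {f f' : ℝ → ℝ → ℝ} {a b t c : ℝ}
    (hf : ContinuousOn (fun p : ℝ × ℝ => f p.1 p.2) (Icc a b ×ˢ Icc a b))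
    (hf' : ContinuousOn (fun p : ℝ × ℝ => f' p.1 p.2) (Icc a b ×ˢ Icc a b))
    (hderiv : ∀ s ∈ Icc a b, ∀ τ ∈ Ioo a b, HasDerivAt (fun σ => f σ s) (f' τ s) τ)
    (ht : t ∈ Ioo a b) (hc : c ∈ Icc a b) :
    HasDerivAt (fun τ => ∫ u in τ..c, Real.exp (-∫ s in τ..u, f τ s))
      (f t t * (∫ u in t..c, Real.exp (-∫ s in t..u, f t s)) - 1
        - ∫ u in t..c, Real.exp (-∫ s in t..u, f t s) * ∫ s in t..u, f' t s) t := by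
  have htI := Ioo_subset_Icc_self ht
  have hE : ContinuousOn (fun p : ℝ × ℝ => Real.exp (-∫ s in p.1..p.2, f p.1 s))
      (Icc a b ×ˢ Icc a b) :=
    (continuousOn_intervalIntegral_param hf).neg.rexp
  have hE' : ContinuousOn (fun p : ℝ × ℝ => Real.exp (-∫ s in p.1..p.2, f p.1 s) *
      ∫ s in p.1..p.2, f' p.1 s) (Icc a b ×ˢ Icc a b) :=
    hE.mul (continuousOn_intervalIntegral_param hf')
  have hdiag : ContinuousOn (fun p : ℝ × ℝ => f p.1 p.1) (Icc a b ×ˢ Icc a b) :=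
    hf.comp (continuousOn_fst.prodMk continuousOn_fst) fun p hp => ⟨hp.1, hp.1⟩
  have hEderiv : ∀ u ∈ Icc a b, ∀ τ ∈ Ioo a b,
      HasDerivAt (fun σ => Real.exp (-∫ s in σ..u, f σ s))
        (f τ τ * Real.exp (-∫ s in τ..u, f τ s) -
          Real.exp (-∫ s in τ..u, f τ s) * ∫ s in τ..u, f' τ s) τ := fun u hu τ hτ =>
    (hasDerivAt_intervalIntegral_param_lowerLimit hf hf' hderiv hτ hu).neg.exp.congr_deriv
      (by simp only [Pi.neg_apply]; ring)
  have := hasDerivAt_intervalIntegral_param_lowerLimit hE ((hdiag.mul hE).sub hE') hEderiv ht hc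
  have hslice : ∀ {G : ℝ × ℝ → ℝ}, ContinuousOn G (Icc a b ×ˢ Icc a b) →
      IntervalIntegrable (fun u => G (t, u)) volume t c := fun hG =>
    (hG.comp (continuousOn_const.prodMk continuousOn_id)
      fun u hu => ⟨htI, uIcc_subset_Icc htI hc hu⟩).intervalIntegrable
  refine this.congr_deriv ?_
  rw [integral_same, neg_zero, Real.exp_zero, integral_sub ((hslice hE).const_mul _) (hslice hE'),
    intervalIntegral.integral_const_mul]
  ring

theorem integral_mul_integral_add {D φ ψ : ℝ → ℝ} {t c : ℝ}
    (hD : ContinuousOn D (uIcc t c)) (hφ : ContinuousOn φ (uIcc t c))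
    (hψ : ContinuousOn ψ (uIcc t c)) :
    ∫ u in t..c, D u * ∫ s in t..u, (φ s + ψ s) =
      (∫ u in t..c, D u * ∫ s in t..u, φ s) + ∫ u in t..c, D u * ∫ s in t..u, ψ s := by
  have hprim : ∀ {χ : ℝ → ℝ}, ContinuousOn χ (uIcc t c) →
      IntervalIntegrable (fun u => D u * ∫ s in t..u, χ s) volume t c := fun hχ =>
    ContinuousOn.intervalIntegrable
      (hD.mul (continuousOn_primitive_interval' hχ.intervalIntegrable left_mem_uIcc))
  rw [← integral_add (hprim hφ) (hprim hψ)]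
  refine integral_congr fun u hu => ?_
  have hsub : uIcc t u ⊆ uIcc t c := uIcc_subset_uIcc_left hu
  rw [integral_add ((hφ.mono hsub).intervalIntegrable) ((hψ.mono hsub).intervalIntegrable),
    mul_add]

theorem annuity_form_time_derivative_general (T : ℝ)
    (g h gt ht : ℝ → ℝ → ℝ)
    (hg_cont : ContinuousOn (fun p : ℝ × ℝ => g p.1 p.2) (Icc 0 T ×ˢ Icc 0 T))
    (hh_cont : ContinuousOn (fun p : ℝ × ℝ => h p.1 p.2) (Icc 0 T ×ˢ Icc 0 T))
    (hgt_cont : ContinuousOn (fun p : ℝ × ℝ => gt p.1 p.2) (Icc 0 T ×ˢ Icc 0 T))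
    (hht_cont : ContinuousOn (fun p : ℝ × ℝ => ht p.1 p.2) (Icc 0 T ×ˢ Icc 0 T))
    (hg_deriv : ∀ s ∈ Icc (0 : ℝ) T, ∀ t ∈ Ioo (0 : ℝ) T,
      HasDerivAt (fun τ => g τ s) (gt t s) t)
    (hh_deriv : ∀ s ∈ Icc (0 : ℝ) T, ∀ t ∈ Ioo (0 : ℝ) T,
      HasDerivAt (fun τ => h τ s) (ht t s) t)
    (hg_diag : ∀ t ∈ Icc (0 : ℝ) T, g t t = 1) :
    ∀ t ∈ Ioo (0 : ℝ) T, ∀ r : ℝ,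
      HasDerivAt
        (fun τ => ∫ u in τ..T, Real.exp (-∫ s in τ..u, (r * g τ s + h τ s)))
        ((r + h t t) * (∫ u in t..T, Real.exp (-∫ s in t..u, (r * g t s + h t s)))
          - 1
          - (∫ u in t..T, Real.exp (-∫ s in t..u, (r * g t s + h t s))
              * (∫ s in t..u, r * gt t s))
          - (∫ u in t..T, Real.exp (-∫ s in t..u, (r * g t s + h t s))
              * (∫ s in t..u, ht t s))) t := by
  intro t htT r
  have htI : t ∈ Icc (0 : ℝ) T := Ioo_subset_Icc_self htT
  have hTI : T ∈ Icc (0 : ℝ) T := right_mem_Icc.2 (htT.1.trans htT.2).le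
  have hsub : uIcc t T ⊆ Icc 0 T := uIcc_subset_Icc htI hTI
  have hf : ContinuousOn (fun s => r * g t s + h t s) (uIcc t T) :=
    ((continuousOn_const.mul (hg_cont.uncurry_left t htI)).add
      (hh_cont.uncurry_left t htI)).mono hsub
  have hD :=
    (continuousOn_primitive_interval' (μ := volume) hf.intervalIntegrable left_mem_uIcc).neg.rexp
  refine (hasDerivAt_integral_exp_neg_integral (f := fun τ s => r * g τ s + h τ s)
    (f' := fun τ s => r * gt τ s + ht τ s) ((continuousOn_const.mul hg_cont).add hh_cont)
    ((continuousOn_const.mul hgt_cont).add hht_cont)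
    (fun s hs τ hτ => ((hg_deriv s hs τ hτ).const_mul r).add (hh_deriv s hs τ hτ))
    htT hTI).congr_deriv ?_
  rw [hg_diag t htI, integral_mul_integral_add
    (D := fun u => Real.exp (-∫ s in t..u, (r * g t s + h t s))) (φ := fun s => r * gt t s) hD
    ((continuousOn_const.mul (hgt_cont.uncurry_left t htI)).mono hsub)
    ((hht_cont.uncurry_left t htI).mono hsub)]
  ring

/-- Leibniz rule for the annuity-form wealth-to-consumption factor
`a(t,r) = ∫_t^T exp(−∫_t^u (r·g(t,s) + h(t,s)) ds) du`:
for `(t,r) ∈ (0,T) × ℝ`,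
`∂a/∂t(t,r) = (r + h(t,t))·a(t,r) − 1 − H₁(t,r) − H₂(t,r)`, where
`H₁(t,r) = ∫_t^T exp(−∫_t^u (r·g(t,s)+h(t,s)) ds)·(∫_t^u r·∂g/∂t(t,s) ds) du` and
`H₂(t,r) = ∫_t^T exp(−∫_t^u (r·g(t,s)+h(t,s)) ds)·(∫_t^u ∂h/∂t(t,s) ds) du`. -/
theorem annuity_form_time_derivative (T : ℝ) (hT : 0 < T)
    (g h gt ht : ℝ → ℝ → ℝ)
    (hg_cont : ContinuousOn (fun p : ℝ × ℝ => g p.1 p.2) (Icc 0 T ×ˢ Icc 0 T))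
    (hh_cont : ContinuousOn (fun p : ℝ × ℝ => h p.1 p.2) (Icc 0 T ×ˢ Icc 0 T))
    (hgt_cont : ContinuousOn (fun p : ℝ × ℝ => gt p.1 p.2) (Icc 0 T ×ˢ Icc 0 T))
    (hht_cont : ContinuousOn (fun p : ℝ × ℝ => ht p.1 p.2) (Icc 0 T ×ˢ Icc 0 T))
    (hg_deriv : ∀ s ∈ Icc (0 : ℝ) T, ∀ t ∈ Ioo (0 : ℝ) T,
      HasDerivAt (fun τ => g τ s) (gt t s) t)
    (hh_deriv : ∀ s ∈ Icc (0 : ℝ) T, ∀ t ∈ Ioo (0 : ℝ) T,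
      HasDerivAt (fun τ => h τ s) (ht t s) t)
    (hg_diag : ∀ t ∈ Icc (0 : ℝ) T, g t t = 1) :
    ∀ t ∈ Ioo (0 : ℝ) T, ∀ r : ℝ,
      HasDerivAt
        (fun τ => ∫ u in τ..T, Real.exp (-∫ s in τ..u, (r * g τ s + h τ s)))
        ((r + h t t) * (∫ u in t..T, Real.exp (-∫ s in t..u, (r * g t s + h t s)))
          - 1
          - (∫ u in t..T, Real.exp (-∫ s in t..u, (r * g t s + h t s))
              * (∫ s in t..u, r * gt t s))
          - (∫ u in t..T, Real.exp (-∫ s in t..u, (r * g t s + h t s))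
              * (∫ s in t..u, ht t s))) t :=
  annuity_form_time_derivative_general T g h gt ht hg_cont hh_cont hgt_cont hht_cont hg_deriv
    hh_deriv hg_diag
end
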